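/- arXiv:math/0512256 — 4 statements merged into one kernel-verified Lean document; each statement's English description precedes it below -/
import Mathlib

section
/- If f is the subword complexity function of an infinite gap increasing word, then f(1) = 2, f(2) = 3, and |Δ²f(n)| ≤ 1 for all n ≥ 1, where Δf(n) = f(n+1) - f(n) and Δ²f(n) = Δf(n+1) - Δf(n). -/
/-- `u` occurs in `w` starting at position `i` (positions are 1-indexed). -/
def FactorAt (w : ℕ → Fin 2) (i : ℕ) (u : List (Fin 2)) : Prop :=
  u = (List.range u.length).map (fun k => w (i + k))

/-- `u` is a subword (factor) of the infinite word `w`. -/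
def IsFactor (w : ℕ → Fin 2) (u : List (Fin 2)) : Prop :=
  ∃ i, 1 ≤ i ∧ FactorAt w i u

/-- The subword complexity function of `w`. -/
noncomputable def complexity (w : ℕ → Fin 2) (n : ℕ) : ℕ :=
  Set.ncard {u : List (Fin 2) | u.length = n ∧ IsFactor w u}

/-- `G` is the 1-distribution function of `w`: `G 0 = 0` and `G i` is the
position of the `i`-th `1` of `w` (positions 1-indexed). -/
def OneDistrib (w : ℕ → Fin 2) (G : ℕ → ℕ) : Prop :=
  G 0 = 0 ∧ StrictMono G ∧ ∀ p, 1 ≤ p → (w p = 1 ↔ ∃ i, 1 ≤ i ∧ G i = p)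

/-- The gap function associated with a 1-distribution function `G`. -/
def gap (G : ℕ → ℕ) (i : ℕ) : ℕ := G i - G (i - 1)

/-- The gap function is strictly increasing. -/
def GapIncreasing (G : ℕ → ℕ) : Prop :=
  ∀ i, 1 ≤ i → gap G i < gap G (i + 1)

/-- `u` is a right special factor of `w`. -/
def RightSpecial (w : ℕ → Fin 2) (u : List (Fin 2)) : Prop :=
  IsFactor w (u ++ [0]) ∧ IsFactor w (u ++ [1])

/-!
For any binary word, `f (n + 1) - f n` is the number of right special factors of length `n`.
In a gap increasing word a factor followed by a `1` is a block ending just before some `1`.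
If that block contains two `1`s, their distance is a gap, and since gaps are pairwise distinct
the block occurs only once in `w`: it is not right special. So the right special factors of
length `n` are `0ⁿ` and one block with a single `1` for each index `m` with
`gap (m + 2) ≤ n < gap (m + 1) + gap (m + 2)`. When `n` grows by one, at most one index enters
this set (`gap (m + 2) = n + 1`) and at most one leaves it (`gap (m + 1) + gap (m + 2) = n + 1`),
hence `|Δ²f n| ≤ 1`.
-/

def window (w : ℕ → Fin 2) (q n : ℕ) : List (Fin 2) :=
  (List.range n).map fun k => w (q + k)

section Factors

variable {w : ℕ → Fin 2}

@[simp] lemma length_window (q n : ℕ) : (window w q n).length = n := by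
  simp [window]

@[simp] lemma getElem_window {q n k : ℕ} (h : k < (window w q n).length) :
    (window w q n)[k] = w (q + k) := by
  simp [window]

lemma window_succ (q n : ℕ) : window w q (n + 1) = window w q n ++ [w (q + n)] := by
  simp [window, List.range_succ]

lemma factorAt_iff_eq_window {q : ℕ} {u : List (Fin 2)} :
    FactorAt w q u ↔ u = window w q u.length :=
  Iff.rfl

lemma factorAt_append_singleton_iff {q : ℕ} {u : List (Fin 2)} {a : Fin 2} :
    FactorAt w q (u ++ [a]) ↔ FactorAt w q u ∧ w (q + u.length) = a := by
  rw [factorAt_iff_eq_window, factorAt_iff_eq_window, List.length_append, List.length_singleton,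
    window_succ, ← List.concat_eq_append, ← List.concat_eq_append, List.concat_inj,
    eq_comm (a := a)]

lemma IsFactor.of_append_singleton {u : List (Fin 2)} {a : Fin 2}
    (h : IsFactor w (u ++ [a])) : IsFactor w u :=
  let ⟨q, hq, hu⟩ := h
  ⟨q, hq, (factorAt_append_singleton_iff.1 hu).1⟩

lemma IsFactor.exists_append_singleton {u : List (Fin 2)} (h : IsFactor w u) :
    ∃ a, IsFactor w (u ++ [a]) :=
  let ⟨q, hq, hu⟩ := h
  ⟨w (q + u.length), q, hq, factorAt_append_singleton_iff.2 ⟨hu, rfl⟩⟩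

lemma isFactor_window {q : ℕ} (hq : 1 ≤ q) (n : ℕ) :
    IsFactor w (window w q n) :=
  ⟨q, hq, by rw [factorAt_iff_eq_window, length_window]⟩

lemma isFactor_window_append {q : ℕ} (hq : 1 ≤ q) (n : ℕ) :
    IsFactor w (window w q n ++ [w (q + n)]) :=
  window_succ (w := w) q n ▸ isFactor_window hq (n + 1)

def factors (w : ℕ → Fin 2) (n : ℕ) : Set (List (Fin 2)) :=
  {u | u.length = n ∧ IsFactor w u}

def rightSpecials (w : ℕ → Fin 2) (n : ℕ) : Set (List (Fin 2)) :=
  {u | u.length = n ∧ RightSpecial w u}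

def factorsFollowedBy (w : ℕ → Fin 2) (n : ℕ) (a : Fin 2) : Set (List (Fin 2)) :=
  {u | u.length = n ∧ IsFactor w (u ++ [a])}

lemma factorsFollowedBy_finite (n : ℕ) (a : Fin 2) : (factorsFollowedBy w n a).Finite :=
  (List.finite_length_eq (Fin 2) n).subset fun _ hu => hu.1

lemma factorsFollowedBy_union (n : ℕ) :
    factorsFollowedBy w n 0 ∪ factorsFollowedBy w n 1 = factors w n := by
  ext u
  constructor
  · rintro (⟨hu, h⟩ | ⟨hu, h⟩) <;> exact ⟨hu, IsFactor.of_append_singleton h⟩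
  · rintro ⟨hu, h⟩
    obtain ⟨a, ha⟩ := IsFactor.exists_append_singleton h
    fin_cases a
    exacts [Or.inl ⟨hu, ha⟩, Or.inr ⟨hu, ha⟩]

lemma factorsFollowedBy_inter (n : ℕ) :
    factorsFollowedBy w n 0 ∩ factorsFollowedBy w n 1 = rightSpecials w n := by
  ext u
  exact ⟨fun ⟨⟨hu, h0⟩, _, h1⟩ => ⟨hu, h0, h1⟩, fun ⟨hu, h0, h1⟩ => ⟨⟨hu, h0⟩, hu, h1⟩⟩

lemma factors_succ (n : ℕ) :
    factors w (n + 1) =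
      (· ++ [0]) '' factorsFollowedBy w n 0 ∪ (· ++ [1]) '' factorsFollowedBy w n 1 := by
  ext v
  constructor
  · rintro ⟨hv, h⟩
    have hne : v ≠ [] := List.ne_nil_of_length_eq_add_one hv
    rw [← List.dropLast_append_getLast hne] at h ⊢
    have hlen : v.dropLast.length = n := by simp [hv]
    generalize v.getLast hne = a at h ⊢
    fin_cases a
    exacts [Or.inl ⟨_, ⟨hlen, h⟩, rfl⟩, Or.inr ⟨_, ⟨hlen, h⟩, rfl⟩]
  · rintro (⟨u, ⟨hu, h⟩, rfl⟩ | ⟨u, ⟨hu, h⟩, rfl⟩) <;> exact ⟨by simp [hu], h⟩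

lemma complexity_eq_ncard_factors (n : ℕ) : complexity w n = (factors w n).ncard :=
  rfl

lemma complexity_succ (n : ℕ) :
    complexity w (n + 1) = complexity w n + (rightSpecials w n).ncard := by
  have hinj (a : Fin 2) : Set.InjOn (· ++ [a]) (factorsFollowedBy w n a) :=
    fun _ _ _ _ h => List.append_cancel_right h
  have hdisj :
      Disjoint ((· ++ [0]) '' factorsFollowedBy w n 0) ((· ++ [1]) '' factorsFollowedBy w n 1) := by
    rw [Set.disjoint_left]
    rintro _ ⟨u, -, rfl⟩ ⟨v, -, h⟩
    simpa using (List.append_inj' h rfl).2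
  have hfin (a : Fin 2) := factorsFollowedBy_finite (w := w) n a
  rw [complexity_eq_ncard_factors, complexity_eq_ncard_factors, factors_succ,
    Set.ncard_union_eq hdisj ((hfin 0).image _) ((hfin 1).image _), (hinj 0).ncard_image,
    (hinj 1).ncard_image, ← Set.ncard_union_add_ncard_inter _ _ (hfin 0) (hfin 1),
    factorsFollowedBy_union, factorsFollowedBy_inter]

lemma complexity_zero : complexity w 0 = 1 := by
  have : factors w 0 = {[]} := by
    ext u
    refine ⟨fun hu => List.length_eq_zero_iff.1 hu.1, ?_⟩
    rintro rfl
    exact ⟨rfl, 1, le_rfl, rfl⟩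
  rw [complexity_eq_ncard_factors, this, Set.ncard_singleton]

end Factors

def singleOne (n k : ℕ) : List (Fin 2) :=
  (List.range n).map fun m => if m = k then 1 else 0

@[simp] lemma length_singleOne (n k : ℕ) : (singleOne n k).length = n := by
  simp [singleOne]

lemma singleOne_injective {n k k' : ℕ} (hk : k < n) (h : singleOne n k = singleOne n k') :
    k = k' := by
  by_contra hne
  have := List.getElem_of_eq h (by simpa using hk)
  simp [singleOne, hne] at this

lemma singleOne_ne_replicate {n k : ℕ} (hk : k < n) : singleOne n k ≠ List.replicate n 0 := by
  intro h
  have := List.getElem_of_eq h (by simpa using hk)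
  simp [singleOne] at this

theorem Set.ncard_le_ncard_add_one_of_subsingleton_sdiff {α : Type*} {s t : Set α}
    (ht : t.Finite) (h : (s \ t).Subsingleton) : s.ncard ≤ t.ncard + 1 := by
  have hsdiff : (s \ t).ncard ≤ 1 := (Set.ncard_le_one h.finite).2 fun _ ha _ hb => h ha hb
  have := Set.ncard_le_ncard_sdiff_add_ncard s t ht
  omega

lemma gap_succ (G : ℕ → ℕ) (m : ℕ) : gap G (m + 1) = G (m + 1) - G m := rfl

lemma GapIncreasing.strictMono {G : ℕ → ℕ} (hg : GapIncreasing G) :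
    StrictMono fun m => gap G (m + 1) :=
  strictMono_nat_of_lt_succ fun m => hg (m + 1) (Nat.succ_pos m)

lemma GapIncreasing.strictMono_add {G : ℕ → ℕ} (hg : GapIncreasing G) :
    StrictMono fun m => gap G (m + 1) + gap G (m + 2) :=
  hg.strictMono.add (hg.strictMono.comp (strictMono_id.add_const 1))

lemma GapIncreasing.succ_le_gap {G : ℕ → ℕ} (hg : GapIncreasing G) (h₀₁ : G 0 < G 1) (m : ℕ) :
    m + 1 ≤ gap G (m + 1) := by
  have := hg.strictMono.add_le_nat m 0
  simp only [gap_succ, zero_add, add_zero] at this ⊢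
  omega

section OneDistrib

variable {w : ℕ → Fin 2} {G : ℕ → ℕ}

lemma OneDistrib.strictMono (hG : OneDistrib w G) : StrictMono G := hG.2.1

lemma OneDistrib.apply_eq_one (hG : OneDistrib w G) (i : ℕ) : w (G (i + 1)) = 1 := by
  have hpos : 0 < G (i + 1) := hG.1 ▸ hG.strictMono (Nat.succ_pos i)
  exact (hG.2.2 _ hpos).2 ⟨i + 1, Nat.succ_pos i, rfl⟩

lemma OneDistrib.exists_eq_of_apply_eq_one (hG : OneDistrib w G) {p : ℕ} (hp : 1 ≤ p)
    (h : w p = 1) : ∃ i, G (i + 1) = p := by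
  obtain ⟨i, hi, rfl⟩ := (hG.2.2 p hp).1 h
  exact ⟨i - 1, by rw [Nat.sub_add_cancel hi]⟩

lemma OneDistrib.apply_eq_zero (hG : OneDistrib w G) {j p : ℕ} (h₁ : G j < p)
    (h₂ : p < G (j + 1)) : w p = 0 := by
  by_contra h
  obtain ⟨i, rfl⟩ := hG.exists_eq_of_apply_eq_one (by omega) (Fin.eq_one_of_ne_zero _ h)
  rw [hG.strictMono.lt_iff_lt] at h₁ h₂
  omega

lemma OneDistrib.pos_of_apply_pos (hG : OneDistrib w G) {i : ℕ} (h : 0 < G i) : 0 < i := by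
  rcases i with _ | i
  · exact absurd hG.1 h.ne'
  · exact Nat.succ_pos i

lemma OneDistrib.window_eq_replicate (hG : OneDistrib w G) {j q n : ℕ} (h₁ : G j < q)
    (h₂ : q + n ≤ G (j + 1)) : window w q n = List.replicate n 0 :=
  List.ext_getElem (by simp) fun k hk _ => by
    simp only [length_window] at hk
    simpa using hG.apply_eq_zero (j := j) (by omega) (by omega)

lemma OneDistrib.window_eq_singleOne (hG : OneDistrib w G) {j q n : ℕ} (h₁ : G j < q)
    (h₂ : q ≤ G (j + 1)) (h₃ : q + n ≤ G (j + 2)) :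
    window w q n = singleOne n (G (j + 1) - q) :=
  List.ext_getElem (by simp) fun k hk _ => by
    simp only [length_window] at hk
    simp only [getElem_window, singleOne, List.getElem_map, List.getElem_range]
    split_ifs with hk'
    · rw [show q + k = G (j + 1) by omega]
      exact hG.apply_eq_one j
    · rcases Nat.lt_or_gt_of_ne hk' with hlt | hgt
      · exact hG.apply_eq_zero (j := j) (by omega) (by omega)
      · exact hG.apply_eq_zero (j := j + 1) (by omega) (show _ < G (j + 2) by omega)

lemma OneDistrib.eq_of_window_eq (hG : OneDistrib w G) (hg : GapIncreasing G) {j q q' n : ℕ}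
    (hq : q ≤ G (j + 1)) (hn : G (j + 2) < q + n) (hq' : 1 ≤ q')
    (h : window w q' n = window w q n) : q' = q := by
  have hw (k : ℕ) (hk : k < n) : w (q' + k) = w (q + k) :=
    List.map_inj_left.1 h k (List.mem_range.2 hk)
  have hG₁₂ : G (j + 1) < G (j + 2) := hG.strictMono (by omega)
  obtain ⟨m, hm⟩ := hG.exists_eq_of_apply_eq_one (p := q' + (G (j + 1) - q)) (by omega) (by
    rw [hw _ (by omega), show q + (G (j + 1) - q) = G (j + 1) by omega]
    exact hG.apply_eq_one _)
  obtain ⟨m', hm'⟩ := hG.exists_eq_of_apply_eq_one (p := q' + (G (j + 2) - q)) (by omega) (by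
    rw [hw _ (by omega), show q + (G (j + 2) - q) = G (j + 2) by omega]
    exact hG.apply_eq_one _)
  have hlt : m < m' := by
    have := hG.strictMono.lt_iff_lt.1 (show G (m + 1) < G (m' + 1) by omega)
    omega
  -- the copy at `q'` has no `1` between these two either, so they are consecutive `1`s of `w`
  obtain rfl : m' = m + 1 := by
    by_contra hne
    have h₁ : G (m + 1) < G (m + 2) := hG.strictMono (by omega)
    have h₂ : G (m + 2) < G (m' + 1) := hG.strictMono (by omega)
    have hone : w (G (m + 2)) = 1 := hG.apply_eq_one (m + 1)
    rw [show G (m + 2) = q' + (G (m + 2) - q') by omega, hw _ (by omega),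
      hG.apply_eq_zero (j := j + 1) (by omega) (show _ < G (j + 2) by omega)] at hone
    exact absurd hone (by decide)
  have hgap : G (m + 1 + 1) - G (m + 1) = G (j + 2) - G (j + 1) := by omega
  obtain rfl : m = j := by simpa using hg.strictMono.injective hgap
  omega

end OneDistrib

/-- `m` stands for the block of length `n` ending just before the `(m + 2)`-th `1`; these are the
indices for which that block contains exactly one `1`. -/
def singleOneIndices (G : ℕ → ℕ) (n : ℕ) : Set ℕ :=
  {m | gap G (m + 2) ≤ n ∧ n < gap G (m + 1) + gap G (m + 2)}

section singleOneIndices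

variable {G : ℕ → ℕ} (hg : GapIncreasing G)
include hg

lemma singleOneIndices_subset_Iio (n : ℕ) : singleOneIndices G n ⊆ Set.Iio n := fun m hm => by
  have : m + 1 ≤ gap G (m + 2) := hg.strictMono.id_le (m + 1)
  exact Set.mem_Iio.2 (by have := hm.1; omega)

lemma singleOneIndices_finite (n : ℕ) : (singleOneIndices G n).Finite :=
  (Set.finite_Iio n).subset (singleOneIndices_subset_Iio hg n)

lemma singleOneIndices_eq_empty {n : ℕ} (hn : n ≤ 1) : singleOneIndices G n = ∅ :=
  Set.eq_empty_of_forall_notMem fun m ⟨h₁, h₂⟩ => by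
    have : gap G (m + 1) < gap G (m + 2) := hg (m + 1) (by omega)
    omega

lemma subsingleton_singleOneIndices_succ_sdiff (n : ℕ) :
    (singleOneIndices G (n + 1) \ singleOneIndices G n).Subsingleton := by
  have key {m} (hm : m ∈ singleOneIndices G (n + 1) \ singleOneIndices G n) :
      gap G (m + 2) = n + 1 := by
    obtain ⟨⟨h₁, h₂⟩, h⟩ := hm
    by_contra hne
    exact h ⟨by omega, by omega⟩
  exact fun m hm m' hm' =>
    Nat.succ_injective (hg.strictMono.injective ((key hm).trans (key hm').symm))

lemma subsingleton_singleOneIndices_sdiff_succ (n : ℕ) :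
    (singleOneIndices G n \ singleOneIndices G (n + 1)).Subsingleton := by
  have key {m} (hm : m ∈ singleOneIndices G n \ singleOneIndices G (n + 1)) :
      gap G (m + 1) + gap G (m + 2) = n + 1 := by
    obtain ⟨⟨h₁, h₂⟩, h⟩ := hm
    by_contra hne
    exact h ⟨by omega, by omega⟩
  exact fun m hm m' hm' => hg.strictMono_add.injective ((key hm).trans (key hm').symm)

lemma ncard_singleOneIndices_succ_le (n : ℕ) :
    (singleOneIndices G (n + 1)).ncard ≤ (singleOneIndices G n).ncard + 1 :=
  Set.ncard_le_ncard_add_one_of_subsingleton_sdiff (singleOneIndices_finite hg n)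
    (subsingleton_singleOneIndices_succ_sdiff hg n)

lemma ncard_singleOneIndices_le_succ (n : ℕ) :
    (singleOneIndices G n).ncard ≤ (singleOneIndices G (n + 1)).ncard + 1 :=
  Set.ncard_le_ncard_add_one_of_subsingleton_sdiff (singleOneIndices_finite hg (n + 1))
    (subsingleton_singleOneIndices_sdiff_succ hg n)

end singleOneIndices

section GapIncreasingWord

variable {w : ℕ → Fin 2} {G : ℕ → ℕ} (hG : OneDistrib w G) (hg : GapIncreasing G)
include hG hg

lemma isFactor_replicate_append_one (n : ℕ) : IsFactor w (List.replicate n 0 ++ [1]) := by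
  have hgap : n + 1 ≤ G (n + 1) - G n := hg.succ_le_gap (hG.strictMono zero_lt_one) n
  have := isFactor_window_append (w := w) (q := G (n + 1) - n) (by omega) n
  rwa [hG.window_eq_replicate (j := n) (by omega) (by omega),
    show G (n + 1) - n + n = G (n + 1) by omega, hG.apply_eq_one] at this

lemma rightSpecial_replicate (n : ℕ) : RightSpecial w (List.replicate n 0) :=
  ⟨List.replicate_succ' (n := n) (a := (0 : Fin 2)) ▸
    IsFactor.of_append_singleton (isFactor_replicate_append_one hG hg (n + 1)),
    isFactor_replicate_append_one hG hg n⟩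

lemma rightSpecial_singleOne {n m : ℕ} (hm : m ∈ singleOneIndices G n) :
    RightSpecial w (singleOne n (n - gap G (m + 2))) := by
  obtain ⟨h₁, h₂⟩ := hm
  have hd₁ : gap G (m + 1) = G (m + 1) - G m := rfl
  have hd₂ : gap G (m + 2) = G (m + 2) - G (m + 1) := rfl
  have hlt : G (m + 1) < G (m + 2) := hG.strictMono (by omega)
  have hgap := hg.succ_le_gap (hG.strictMono zero_lt_one)
  have hgap₁ : n + 1 ≤ G (n + 1) - G n := hgap n
  have hgap₂ : n + 2 ≤ G (n + 2) - G (n + 1) := hgap (n + 1)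
  constructor
  -- followed by `0`: read it around the `(n + 1)`-th `1`, both of whose adjacent gaps exceed `n`
  · have := isFactor_window_append (w := w) (q := G (n + 1) - (n - gap G (m + 2)))
      (by omega) n
    rwa [hG.window_eq_singleOne (j := n) (by omega) (by omega) (by omega),
      show G (n + 1) - (G (n + 1) - (n - gap G (m + 2))) = n - gap G (m + 2) by omega,
      hG.apply_eq_zero (j := n + 1) (by omega) (show _ < G (n + 2) by omega)] at this
  · have := isFactor_window_append (w := w) (q := G (m + 2) - n) (by omega) n
    rwa [hG.window_eq_singleOne (j := m) (by omega) (by omega) (by omega),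
      show G (m + 1) - (G (m + 2) - n) = n - gap G (m + 2) by omega,
      show G (m + 2) - n + n = G (m + 2) by omega, hG.apply_eq_one] at this

lemma RightSpecial.eq_replicate_or_singleOne {n : ℕ} {u : List (Fin 2)} (hu : u.length = n)
    (h : RightSpecial w u) :
    u = List.replicate n 0 ∨ ∃ m ∈ singleOneIndices G n, u = singleOne n (n - gap G (m + 2)) := by
  obtain ⟨q, hq, hf⟩ := h.2
  rw [factorAt_append_singleton_iff, factorAt_iff_eq_window, hu] at hf
  obtain ⟨rfl, hq₁⟩ := hf
  obtain ⟨i, hi⟩ := hG.exists_eq_of_apply_eq_one (by omega) hq₁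
  by_cases ha : G i < q
  · exact Or.inl (hG.window_eq_replicate ha hi.ge)
  obtain ⟨m, rfl⟩ := Nat.exists_eq_add_one.2 (hG.pos_of_apply_pos (i := i) (by omega))
  replace hi : G (m + 2) = q + n := hi
  have hlt : G (m + 1) < q + n := hi ▸ hG.strictMono (by omega)
  by_cases hb : G m < q
  · have hd₁ : gap G (m + 1) = G (m + 1) - G m := rfl
    have hd₂ : gap G (m + 2) = G (m + 2) - G (m + 1) := rfl
    refine Or.inr ⟨m, ⟨by omega, by omega⟩, ?_⟩
    rw [hG.window_eq_singleOne hb (not_lt.1 ha) hi.ge]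
    congr 1
    omega
  · obtain ⟨l, rfl⟩ := Nat.exists_eq_add_one.2 (hG.pos_of_apply_pos (i := m) (by omega))
    obtain ⟨q', hq', hf'⟩ := h.1
    rw [factorAt_append_singleton_iff, factorAt_iff_eq_window, length_window] at hf'
    obtain rfl := hG.eq_of_window_eq hg (j := l) (not_lt.1 hb) hlt hq' hf'.1.symm
    exact absurd (hq₁.symm.trans hf'.2) (by decide)

lemma rightSpecials_eq (n : ℕ) :
    rightSpecials w n = insert (List.replicate n 0)
      ((fun m => singleOne n (n - gap G (m + 2))) '' singleOneIndices G n) := by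
  ext u
  constructor
  · rintro ⟨hu, h⟩
    rcases h.eq_replicate_or_singleOne hG hg hu with rfl | ⟨m, hm, rfl⟩
    exacts [Set.mem_insert _ _, Set.mem_insert_of_mem _ ⟨m, hm, rfl⟩]
  · rintro (rfl | ⟨m, hm, rfl⟩)
    exacts [⟨by simp, rightSpecial_replicate hG hg n⟩,
      ⟨by simp, rightSpecial_singleOne hG hg hm⟩]

lemma ncard_rightSpecials (n : ℕ) :
    (rightSpecials w n).ncard = (singleOneIndices G n).ncard + 1 := by
  have hpos (m : ℕ) : 0 < gap G (m + 2) := (Nat.zero_le _).trans_lt (hg (m + 1) (by omega))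
  have hinj : Set.InjOn (fun m => singleOne n (n - gap G (m + 2))) (singleOneIndices G n) :=
    fun m hm m' hm' h => by
      have hk := singleOne_injective (by have := hpos m; have := hm.1; omega) h
      exact Nat.succ_injective (hg.strictMono.injective
        (show gap G (m + 2) = gap G (m' + 2) by have := hm.1; have := hm'.1; omega))
  have hnotMem : List.replicate n 0 ∉
      (fun m => singleOne n (n - gap G (m + 2))) '' singleOneIndices G n := by
    rintro ⟨m, hm, h⟩
    exact singleOne_ne_replicate (by have := hpos m; have := hm.1; omega) h
  rw [rightSpecials_eq hG hg, Set.ncard_insert_of_notMem hnotMem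
    ((singleOneIndices_finite hg n).image _), hinj.ncard_image]

end GapIncreasingWord

theorem stmt12 (w : ℕ → Fin 2) (G : ℕ → ℕ) (hG : OneDistrib w G)
    (hg : GapIncreasing G) :
    complexity w 1 = 2 ∧ complexity w 2 = 3 ∧
    ∀ n, 1 ≤ n →
      |((complexity w (n + 2) : ℤ) - (complexity w (n + 1) : ℤ))
        - ((complexity w (n + 1) : ℤ) - (complexity w n : ℤ))| ≤ 1 := by
  have hstep (n : ℕ) :
      complexity w (n + 1) = complexity w n + (singleOneIndices G n).ncard + 1 := by
    rw [complexity_succ, ncard_rightSpecials hG hg, add_assoc]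
  have h₁ : complexity w 1 = 2 := by
    rw [hstep, complexity_zero, singleOneIndices_eq_empty hg zero_le_one, Set.ncard_empty]
  refine ⟨h₁, ?_, fun n _ => ?_⟩
  · rw [hstep, h₁, singleOneIndices_eq_empty hg le_rfl, Set.ncard_empty]
  · have hup := ncard_singleOneIndices_succ_le hg n
    have hdown := ncard_singleOneIndices_le_succ hg n
    rw [abs_le, hstep (n + 1), hstep n]
    omega
end

section
/- Let w be an infinite gap increasing binary word with subword complexity f. For each n ≥ 1: (a) if 10ⁿ1 is a subword of w and w has no double gap of length n-1, then Δ²f(n) = 1; (b) if 10ⁿ1 is not a subword of w and w has a double gap of length n-1, then Δ²f(n) = -1; (c) in the two remaining cases, Δ²f(n) = 0. -/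
set_option linter.unusedSectionVars false
set_option linter.unusedVariables false
set_option linter.unnecessarySimpa false
set_option maxHeartbeats 1000000


/-- `w` has a double gap of length `m`: two consecutive gaps (blocks of zeros
between 1's, or before the first 1) whose lengths sum to `m`. -/
def HasDoubleGap (w : ℕ → Fin 2) (m : ℕ) : Prop :=
  ∃ k, k ≤ m ∧
    (IsFactor w ([1] ++ List.replicate k 0 ++ [1] ++ List.replicate (m - k) 0 ++ [1]) ∨
      FactorAt w 1 (List.replicate k 0 ++ [1] ++ List.replicate (m - k) 0 ++ [1]))

namespace GapAux

lemma fin2_cases (x : Fin 2) : x = 0 ∨ x = 1 := by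
  fin_cases x <;> simp

section
variable {w : ℕ → Fin 2} {G : ℕ → ℕ}
variable (h0 : G 0 = 0) (hm : StrictMono G)
  (hw : ∀ p, 1 ≤ p → (w p = 1 ↔ ∃ i, 1 ≤ i ∧ G i = p))
  (hg : GapIncreasing G)

include hm in
lemma le_G : ∀ i, i ≤ G i := fun _ => hm.le_apply

include hm in
lemma gap_pos {i : ℕ} (hi : 1 ≤ i) : 1 ≤ gap G i := by
  have := hm (show i - 1 < i by omega)
  unfold gap; omega

include hm in
lemma G_succ (i : ℕ) : G (i + 1) = G i + gap G (i + 1) := by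
  have := hm (show i < i + 1 by omega)
  have : G i ≤ G (i+1) := le_of_lt this
  simp only [gap, Nat.add_sub_cancel]
  omega

include hg hm in
lemma gap_add_le {i : ℕ} (hi : 1 ≤ i) (k : ℕ) : gap G i + k ≤ gap G (i + k) := by
  induction k with
  | zero => simpa using le_refl _
  | succ k ih =>
    have h2 : gap G (i+k) < gap G (i+k+1) := hg (i + k) (by omega)
    have he : i + (k+1) = i + k + 1 := by omega
    rw [he]
    omega

include hg hm in
lemma gap_lt {i j : ℕ} (hi : 1 ≤ i) (hij : i < j) : gap G i < gap G j := by
  have := gap_add_le hm hg hi (j - i)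
  have hji : i + (j - i) = j := by omega
  rw [hji] at this
  omega

include hg hm in
lemma self_le_gap {i : ℕ} (hi : 1 ≤ i) : i ≤ gap G i := by
  have h1 := gap_pos hm (show (1:ℕ) ≤ 1 by omega)
  have := gap_add_le hm hg (show (1:ℕ) ≤ 1 by omega) (i - 1)
  have hii : 1 + (i - 1) = i := by omega
  rw [hii] at this
  omega

include hm hw in
lemma w_G {i : ℕ} (hi : 1 ≤ i) : w (G i) = 1 := by
  have hGi : 1 ≤ G i := le_trans hi (le_G hm i)
  exact (hw (G i) hGi).mpr ⟨i, hi, rfl⟩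

include hw hm in
lemma w_between {j p : ℕ} (h1 : G j < p) (h2 : p < G (j + 1)) : w p = 0 := by
  rcases fin2_cases (w p) with h | h
  · exact h
  · exfalso
    obtain ⟨i, hi, hGi⟩ := (hw p (by omega)).mp h
    rw [← hGi] at h1 h2
    have := (hm.lt_iff_lt (a := j) (b := i)).mp h1
    have := (hm.lt_iff_lt (a := i) (b := j+1)).mp h2
    omega

-- value lemmas around i-th one
include hm hw in
lemma w_left {i a k : ℕ} (hi : 1 ≤ i) (ha : a < gap G i) (hk : k < a) :
    w (G i - a + k) = 0 := by
  have hgap : gap G i = G i - G (i-1) := rfl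
  have hlt : G (i-1) < G i := hm (show i - 1 < i by omega)
  have h1 : G (i-1) < G i - a + k := by omega
  have h2 : G i - a + k < G ((i-1)+1) := by
    have : (i-1)+1 = i := by omega
    rw [this]; omega
  exact w_between hm hw h1 h2

include hm hw in
lemma w_right {i a k : ℕ} (hi : 1 ≤ i) (ha : a ≤ G i) (h1 : a < k)
    (h2 : k < a + gap G (i + 1)) : w (G i - a + k) = 0 := by
  have hs := G_succ hm i
  have hb1 : G i < G i - a + k := by omega
  have hb2 : G i - a + k < G (i+1) := by omega
  exact w_between hm hw hb1 hb2

end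

/-- window of length n starting at position p -/
def win (w : ℕ → Fin 2) (p n : ℕ) : List (Fin 2) :=
  (List.range n).map (fun k => w (p + k))

@[simp] lemma win_length (w : ℕ → Fin 2) (p n : ℕ) : (win w p n).length = n := by
  simp [win]

lemma win_getElem (w : ℕ → Fin 2) (p n k : ℕ) (h : k < n) :
    (win w p n)[k]'(by simpa using h) = w (p + k) := by
  simp [win]

lemma factorAt_iff_win (w : ℕ → Fin 2) (p : ℕ) (u : List (Fin 2)) :
    FactorAt w p u ↔ u = win w p u.length := Iff.rfl

lemma isFactor_win (w : ℕ → Fin 2) {p : ℕ} (hp : 1 ≤ p) (n : ℕ) :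
    IsFactor w (win w p n) := by
  refine ⟨p, hp, ?_⟩
  rw [factorAt_iff_win, win_length]

lemma factorSet_eq (w : ℕ → Fin 2) (n : ℕ) :
    {u : List (Fin 2) | u.length = n ∧ IsFactor w u}
      = {u | ∃ p, 1 ≤ p ∧ u = win w p n} := by
  ext u
  simp only [Set.mem_setOf_eq]
  constructor
  · rintro ⟨hl, p, hp, hF⟩
    exact ⟨p, hp, by rw [factorAt_iff_win] at hF; rwa [hl] at hF⟩
  · rintro ⟨p, hp, rfl⟩
    exact ⟨win_length w p n, isFactor_win w hp n⟩

/-- factor with exactly one `1`, at offset `a` -/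
def single (m a : ℕ) : List (Fin 2) :=
  (List.range m).map (fun k => if k = a then 1 else 0)

@[simp] lemma single_length (m a : ℕ) : (single m a).length = m := by simp [single]

lemma single_getElem (m a k : ℕ) (h : k < m) :
    (single m a)[k]'(by simpa using h) = if k = a then 1 else 0 := by
  simp [single]

/-- parameters for factors with at least two 1's -/
def parms (G : ℕ → ℕ) (N m : ℕ) : Finset (ℕ × ℕ) :=
  ((Finset.range N) ×ˢ (Finset.range N)).filter
    (fun x => 1 ≤ x.1 ∧ x.2 < gap G x.1 ∧ gap G (x.1 + 1) + x.2 < m)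

def Pset (G : ℕ → ℕ) (N m : ℕ) : Finset ℕ :=
  (Finset.range N).filter
    (fun i => 1 ≤ i ∧ gap G (i + 1) ≤ m ∧ m < gap G i + gap G (i + 1))

section
variable {w : ℕ → Fin 2} {G : ℕ → ℕ}
variable (h0 : G 0 = 0) (hm : StrictMono G)
  (hw : ∀ p, 1 ≤ p → (w p = 1 ↔ ∃ i, 1 ≤ i ∧ G i = p))
  (hg : GapIncreasing G)

include hm in
lemma gap_le_G {i : ℕ} : gap G i ≤ G i := by
  unfold gap; omega

include hm hw in
lemma w_center {i a : ℕ} (hi : 1 ≤ i) (ha : a ≤ G i) : w (G i - a + a) = 1 := by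
  rw [Nat.sub_add_cancel ha]; exact w_G hm hw hi

include hm hw in
lemma w_second {i a : ℕ} (hi : 1 ≤ i) (ha : a ≤ G i) :
    w (G i - a + (a + gap G (i + 1))) = 1 := by
  have hs := G_succ hm i
  have : G i - a + (a + gap G (i+1)) = G (i+1) := by omega
  rw [this]; exact w_G hm hw (by omega)

include h0 hm hw hg in
lemma repl_is_win {m : ℕ} : List.replicate m (0 : Fin 2) = win w (G m + 1) m := by
  apply List.ext_getElem (by simp)
  intro k h1 h2
  simp only [List.getElem_replicate, win, List.getElem_map, List.getElem_range]
  have hk : k < m := by simpa using h2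
  have hgm : m + 1 ≤ gap G (m+1) := self_le_gap hm hg (by omega)
  have hs := G_succ hm m
  refine (w_between hm hw (j := m) (by omega) (by omega)).symm

include hm hw hg in
lemma single_is_win {m a : ℕ} (hm1 : 1 ≤ m) (ha : a < m) :
    single m a = win w (G m - a) m := by
  have hgm : m ≤ gap G m := self_le_gap hm hg hm1
  have hgG : gap G m ≤ G m := gap_le_G hm
  have hagap : a < gap G m := by omega
  apply List.ext_getElem (by simp)
  intro k h1 h2
  have hk : k < m := by simpa using h2
  rw [single_getElem m a k hk, win_getElem w _ m k hk]
  rcases lt_trichotomy k a with h | h | h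
  · rw [if_neg (by omega), w_left hm hw hm1 hagap h]
  · subst h; rw [if_pos rfl, w_center hm hw hm1 (by omega)]
  · rw [if_neg (by omega), w_right hm hw hm1 (by omega) h ?_]
    have : m + 1 ≤ gap G (m+1) := self_le_gap hm hg (by omega)
    omega

include hm hw in
lemma w_phi {i a k : ℕ} (hi : 1 ≤ i) (ha : a < gap G i)
    (hk2 : k ≤ a + gap G (i+1)) :
    w (G i - a + k) = if k = a ∨ k = a + gap G (i+1) then 1 else 0 := by
  have hgG : gap G i ≤ G i := gap_le_G hm
  rcases lt_trichotomy k a with h | h | h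
  · rw [if_neg (by omega), w_left hm hw hi ha h]
  · subst h; rw [if_pos (Or.inl rfl), w_center hm hw hi (by omega)]
  · rcases eq_or_lt_of_le hk2 with h2 | h2
    · rw [if_pos (Or.inr h2), h2, w_second hm hw hi (by omega)]
    · rw [if_neg (by omega), w_right hm hw hi (by omega) h h2]

lemma list_eq_getElem {α} {l1 l2 : List α} (h : l1 = l2) (k : ℕ)
    (h1 : k < l1.length) (h2 : k < l2.length) : l1[k]'h1 = l2[k]'h2 := by
  subst h; rfl

lemma win_eq_imp {w : ℕ → Fin 2} {p q m : ℕ} (h : win w p m = win w q m)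
    (k : ℕ) (hk : k < m) : w (p + k) = w (q + k) := by
  have := list_eq_getElem h k (by simpa using hk) (by simpa using hk)
  rwa [win_getElem w p m k hk, win_getElem w q m k hk] at this

lemma single_eq_win_imp {w : ℕ → Fin 2} {a q m : ℕ} (h : single m a = win w q m)
    (k : ℕ) (hk : k < m) : (if k = a then (1 : Fin 2) else 0) = w (q + k) := by
  have := list_eq_getElem h k (by simpa using hk) (by simpa using hk)
  rwa [single_getElem m a k hk, win_getElem w q m k hk] at this

lemma repl_eq_win_imp {w : ℕ → Fin 2} {q m : ℕ}
    (h : List.replicate m (0 : Fin 2) = win w q m)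
    (k : ℕ) (hk : k < m) : w (q + k) = 0 := by
  have := list_eq_getElem h k (by simpa using hk) (by simpa using hk)
  rw [win_getElem w q m k hk, List.getElem_replicate] at this
  exact this.symm

include hm hw in
lemma first_one_unique {m i a j b : ℕ} (hi : 1 ≤ i) (ha : a < gap G i)
    (hj : 1 ≤ j) (hb : b < gap G j) (ham : a < m) (hbm : b < m)
    (heq : win w (G i - a) m = win w (G j - b) m) : a = b := by
  by_contra hne
  rcases lt_or_gt_of_ne hne with h | h
  · have e := win_eq_imp heq a ham
    rw [w_phi hm hw hi ha (by omega), if_pos (Or.inl rfl),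
      w_phi hm hw hj hb (by omega), if_neg (by omega)] at e
    exact absurd e (by decide)
  · have e := win_eq_imp heq b hbm
    rw [w_phi hm hw hi ha (by omega), if_neg (by omega),
      w_phi hm hw hj hb (by omega), if_pos (Or.inl rfl)] at e
    exact absurd e (by decide)

include hm hw in
lemma single_ne_phi {m a j b : ℕ} (hj : 1 ≤ j) (hb : b < gap G j)
    (ham : a < m) (hsec : gap G (j+1) + b < m) :
    single m a ≠ win w (G j - b) m := by
  intro heq
  have hab : a = b := by
    by_contra hne
    rcases lt_or_gt_of_ne hne with h | h
    · have e := single_eq_win_imp heq a ham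
      rw [if_pos rfl, w_phi hm hw hj hb (by omega), if_neg (by omega)] at e
      exact absurd e (by decide)
    · have e := single_eq_win_imp heq b (by omega)
      rw [if_neg (by omega), w_phi hm hw hj hb (by omega),
        if_pos (Or.inl rfl)] at e
      exact absurd e.symm (by decide)
  subst hab
  have hga : 1 ≤ gap G (j+1) := gap_pos hm (by omega)
  have e := single_eq_win_imp heq (a + gap G (j+1)) (by omega)
  rw [if_neg (by omega), w_phi hm hw hj hb (by omega), if_pos (Or.inr rfl)] at e
  exact absurd e.symm (by decide)

include h0 hm hw in
lemma factor_classify {p m : ℕ} (hp : 1 ≤ p) :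
    win w p m = List.replicate m (0 : Fin 2) ∨
    (∃ a, a < m ∧ win w p m = single m a) ∨
    (∃ i a, 1 ≤ i ∧ a < gap G i ∧ gap G (i+1) + a < m ∧
      win w p m = win w (G i - a) m) := by
  by_cases hex : ∃ k, k < m ∧ w (p + k) = 1
  · right
    set a := Nat.find hex with ha_def
    obtain ⟨ham, haw⟩ := Nat.find_spec hex
    have hmin : ∀ k, k < a → w (p + k) = 0 := by
      intro k hk
      have := Nat.find_min hex hk
      rcases fin2_cases (w (p+k)) with h | h
      · exact h
      · exact absurd ⟨by omega, h⟩ this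
    obtain ⟨i, hi, hGi⟩ := (hw (p + a) (by omega)).mp haw
    have hga : 1 ≤ gap G i := gap_pos hm hi
    have hGlt : G (i-1) < G i := hm (show i - 1 < i by omega)
    have hgap_def : gap G i = G i - G (i-1) := rfl
    have ha : a < gap G i := by
      by_contra h'
      push_neg at h'
      rcases Nat.eq_or_lt_of_le hi with h1 | h1
      · -- i = 1
        rw [← h1] at hGi h' hgap_def
        rw [h0] at hgap_def
        omega
      · -- i ≥ 2
        have hi1 : 1 ≤ i - 1 := by omega
        have hw1 : w (G (i-1)) = 1 := w_G hm hw hi1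
        have hk' : p + (a - gap G i) = G (i-1) := by omega
        have := hmin (a - gap G i) (by omega)
        rw [hk', hw1] at this
        exact absurd this (by decide)
    have hp' : p = G i - a := by omega
    by_cases hsec : gap G (i+1) + a < m
    · right
      exact ⟨i, a, hi, ha, hsec, by rw [hp']⟩
    · left
      refine ⟨a, ham, ?_⟩
      apply List.ext_getElem (by simp)
      intro k h1 h2
      have hk : k < m := by simpa using h1
      rw [win_getElem w p m k hk, single_getElem m a k hk]
      rcases lt_trichotomy k a with h | h | h
      · rw [if_neg (by omega)]; exact hmin k h
      · subst h; rw [if_pos rfl]; exact haw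
      · rw [if_neg (by omega), hp']
        exact w_right hm hw hi (by have := gap_le_G hm (G := G) (i := i); omega) h (by omega)
  · left
    push_neg at hex
    apply List.ext_getElem (by simp)
    intro k h1 h2
    have hk : k < m := by simpa using h1
    rw [win_getElem w p m k hk, List.getElem_replicate]
    rcases fin2_cases (w (p+k)) with h | h
    · exact h
    · exact absurd h (hex k hk)


lemma mem_parms {G : ℕ → ℕ} {N m : ℕ} {x : ℕ × ℕ} :
    x ∈ parms G N m ↔ x.1 < N ∧ x.2 < N ∧ 1 ≤ x.1 ∧ x.2 < gap G x.1 ∧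
      gap G (x.1 + 1) + x.2 < m := by
  simp only [parms, Finset.mem_filter, Finset.mem_product, Finset.mem_range]
  tauto

include hm hw in
lemma repl_ne_single {m a : ℕ} (ham : a < m) :
    List.replicate m (0 : Fin 2) ≠ single m a := by
  intro h
  have := list_eq_getElem h a (by simpa using ham) (by simpa using ham)
  rw [List.getElem_replicate, single_getElem m a a ham, if_pos rfl] at this
  exact absurd this (by decide)

include hm hw in
lemma repl_ne_phi {m j b : ℕ} (hj : 1 ≤ j) (hb : b < gap G j) (hbm : b < m) :
    List.replicate m (0 : Fin 2) ≠ win w (G j - b) m := by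
  intro h
  have e := repl_eq_win_imp h b hbm
  rw [w_phi hm hw hj hb (by omega), if_pos (Or.inl rfl)] at e
  exact absurd e (by decide)

lemma single_inj {m a b : ℕ} (ham : a < m) (hbm : b < m)
    (h : single m a = single m b) : a = b := by
  have := list_eq_getElem h a (by simpa using ham) (by simpa using ham)
  rw [single_getElem m a a ham, single_getElem m b a ham, if_pos rfl] at this
  by_contra hne
  rw [if_neg (by omega)] at this
  exact absurd this (by decide)

include hm hw hg in
lemma phi_inj {m : ℕ} {x y : ℕ × ℕ} (hx : 1 ≤ x.1 ∧ x.2 < gap G x.1 ∧ gap G (x.1+1) + x.2 < m)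
    (hy : 1 ≤ y.1 ∧ y.2 < gap G y.1 ∧ gap G (y.1+1) + y.2 < m)
    (heq : win w (G x.1 - x.2) m = win w (G y.1 - y.2) m) : x = y := by
  obtain ⟨hi, ha, hsx⟩ := hx
  obtain ⟨hj, hb, hsy⟩ := hy
  have hgi : 1 ≤ gap G (x.1+1) := gap_pos hm (by omega)
  have hgj : 1 ≤ gap G (y.1+1) := gap_pos hm (by omega)
  have hab : x.2 = y.2 := first_one_unique hm hw hi ha hj hb (by omega) (by omega) heq
  have hgap : gap G (x.1+1) = gap G (y.1+1) := by
    rcases lt_trichotomy (gap G (x.1+1)) (gap G (y.1+1)) with h | h | h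
    · exfalso
      have e := win_eq_imp heq (x.2 + gap G (x.1+1)) (by omega)
      rw [w_phi hm hw hi ha (by omega), if_pos (Or.inr rfl), hab,
        w_phi hm hw hj hb (by omega), if_neg (by omega)] at e
      exact absurd e (by decide)
    · exact h
    · exfalso
      have e := win_eq_imp heq (x.2 + gap G (y.1+1)) (by omega)
      rw [w_phi hm hw hi ha (by omega), if_neg (by omega), hab,
        w_phi hm hw hj hb (by omega), if_pos (Or.inr rfl)] at e
      exact absurd e.symm (by decide)
  have hij : x.1 = y.1 := by
    rcases lt_trichotomy x.1 y.1 with h | h | h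
    · exact absurd (gap_lt hm hg (by omega) (by omega : x.1 + 1 < y.1 + 1)) (by omega)
    · exact h
    · exact absurd (gap_lt hm hg (by omega) (by omega : y.1 + 1 < x.1 + 1)) (by omega)
  exact Prod.ext hij hab

include h0 hm hw hg in
lemma complexity_eq {N m : ℕ} (hm1 : 1 ≤ m) (hmN : m ≤ N) :
    complexity w m = 1 + m + (GapAux.parms G N m).card := by
  classical
  set F : Finset (List (Fin 2)) :=
    insert (List.replicate m 0)
      (((Finset.range m).image (single m)) ∪
        ((GapAux.parms G N m).image (fun x => win w (G x.1 - x.2) m))) with hF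
  have hset : {u : List (Fin 2) | u.length = m ∧ IsFactor w u} = ↑F := by
    rw [factorSet_eq]
    ext u
    simp only [Set.mem_setOf_eq, hF, Finset.coe_insert, Set.mem_insert_iff,
      Finset.coe_union, Set.mem_union, Finset.coe_image, Set.mem_image,
      Finset.mem_coe, Finset.mem_range]
    constructor
    · rintro ⟨p, hp, rfl⟩
      rcases factor_classify h0 hm hw (m := m) hp with h | ⟨a, ham, h⟩ |
          ⟨i, a, hi, ha, hsec, h⟩
      · exact Or.inl h
      · exact Or.inr (Or.inl ⟨a, ham, h.symm⟩)
      · refine Or.inr (Or.inr ⟨(i, a), ?_, h.symm⟩)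
        have hsl : i + 1 ≤ gap G (i+1) := self_le_gap hm hg (by omega)
        exact mem_parms.mpr ⟨by omega, by omega, hi, ha, hsec⟩
    · rintro (rfl | ⟨a, ham, rfl⟩ | ⟨x, hx, rfl⟩)
      · refine ⟨G m + 1, by omega, repl_is_win h0 hm hw hg⟩
      · refine ⟨G m - a, ?_, single_is_win hm hw hg hm1 ham⟩
        have h1 : m ≤ gap G m := self_le_gap hm hg hm1
        have h2 : gap G m ≤ G m := gap_le_G hm
        omega
      · obtain ⟨_, _, hx1, hx2, _⟩ := mem_parms.mp hx
        refine ⟨G x.1 - x.2, ?_, rfl⟩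
        have h2 : gap G x.1 ≤ G x.1 := gap_le_G hm
        omega
  have hcomp : complexity w m = F.card := by
    rw [complexity, hset, Set.ncard_coe_finset]
  have hinj_single : Set.InjOn (single m) ↑(Finset.range m) := by
    intro a ha b hb h
    simp only [Finset.coe_range, Set.mem_Iio] at ha hb
    exact single_inj ha hb h
  have hinj_phi : Set.InjOn (fun x : ℕ × ℕ => win w (G x.1 - x.2) m)
      ↑(GapAux.parms G N m) := by
    intro x hx y hy h
    simp only [Finset.mem_coe] at hx hy
    obtain ⟨_, _, hx1, hx2, hx3⟩ := mem_parms.mp hx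
    obtain ⟨_, _, hy1, hy2, hy3⟩ := mem_parms.mp hy
    exact phi_inj hm hw hg ⟨hx1, hx2, hx3⟩ ⟨hy1, hy2, hy3⟩ h
  have hdisj : Disjoint ((Finset.range m).image (single m))
      ((GapAux.parms G N m).image (fun x => win w (G x.1 - x.2) m)) := by
    rw [Finset.disjoint_left]
    rintro u hu1 hu2
    obtain ⟨a, ha, rfl⟩ := Finset.mem_image.mp hu1
    obtain ⟨x, hx, hxe⟩ := Finset.mem_image.mp hu2
    obtain ⟨_, _, hx1, hx2, hx3⟩ := mem_parms.mp hx
    exact single_ne_phi hm hw hx1 hx2 (by simpa using ha) hx3 hxe.symm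
  have hnotmem : List.replicate m (0 : Fin 2) ∉
      ((Finset.range m).image (single m)) ∪
        ((GapAux.parms G N m).image (fun x => win w (G x.1 - x.2) m)) := by
    rw [Finset.mem_union]
    rintro (h | h)
    · obtain ⟨a, ha, hae⟩ := Finset.mem_image.mp h
      exact repl_ne_single hm hw (by simpa using ha) hae.symm
    · obtain ⟨x, hx, hxe⟩ := Finset.mem_image.mp h
      obtain ⟨_, _, hx1, hx2, hx3⟩ := mem_parms.mp hx
      have hg1 : 1 ≤ gap G (x.1+1) := gap_pos hm (by omega)
      exact repl_ne_phi hm hw hx1 hx2 (by omega) hxe.symm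
  rw [hcomp, hF, Finset.card_insert_of_notMem hnotmem,
    Finset.card_union_of_disjoint hdisj,
    Finset.card_image_of_injOn hinj_single,
    Finset.card_image_of_injOn hinj_phi, Finset.card_range]
  omega


lemma mem_Pset {G : ℕ → ℕ} {N m i : ℕ} :
    i ∈ Pset G N m ↔ i < N ∧ 1 ≤ i ∧ gap G (i+1) ≤ m ∧ m < gap G i + gap G (i+1) := by
  simp only [Pset, Finset.mem_filter, Finset.mem_range]
  try tauto

include hm hg in
lemma parms_succ {N m : ℕ} (hmN : m ≤ N) :
    (GapAux.parms G N (m+1)).card = (GapAux.parms G N m).card + (Pset G N m).card := by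
  classical
  have hsplit : parms G N (m+1)
      = parms G N m ∪ (Pset G N m).image (fun i => (i, m - gap G (i+1))) := by
    ext x
    obtain ⟨i, a⟩ := x
    simp only [Finset.mem_union, Finset.mem_image, mem_parms, mem_Pset]
    constructor
    · rintro ⟨h1, h2, h3, h4, h5⟩
      by_cases h : gap G (i+1) + a < m
      · exact Or.inl ⟨h1, h2, h3, h4, h⟩
      · have heq : gap G (i+1) + a = m := by omega
        refine Or.inr ⟨i, ⟨h1, h3, by omega, by omega⟩, ?_⟩
        have : m - gap G (i+1) = a := by omega
        rw [this]
    · rintro (⟨h1, h2, h3, h4, h5⟩ | ⟨j, ⟨hj1, hj2, hj3, hj4⟩, hje⟩)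
      · exact ⟨h1, h2, h3, h4, by omega⟩
      · obtain ⟨rfl, rfl⟩ := Prod.mk.injEq .. |>.mp hje
        have hg2 : gap G j < gap G (j+1) := hg j hj2
        have hg1 : 1 ≤ gap G j := gap_pos hm hj2
        exact ⟨hj1, by omega, hj2, by omega, by omega⟩
  have hdisj : Disjoint (GapAux.parms G N m)
      ((Pset G N m).image (fun i => (i, m - gap G (i+1)))) := by
    rw [Finset.disjoint_left]
    rintro ⟨i, a⟩ hx1 hx2
    obtain ⟨_, _, _, _, h5⟩ := mem_parms.mp hx1
    obtain ⟨j, hj, hje⟩ := Finset.mem_image.mp hx2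
    obtain ⟨_, _, hj3, _⟩ := mem_Pset.mp hj
    obtain ⟨rfl, h6⟩ := Prod.mk.injEq .. |>.mp hje
    have h5' : gap G (j+1) + a < m := h5
    have h6' : m - gap G (j+1) = a := h6
    omega
  have hinj : Set.InjOn (fun i => (i, m - gap G (i+1))) ↑(Pset G N m) := by
    intro i _ j _ h
    exact (Prod.mk.injEq .. |>.mp h).1
  rw [hsplit, Finset.card_union_of_disjoint hdisj, Finset.card_image_of_injOn hinj]

include hm hg in
open Classical in
lemma card_filter_gap_eq {N n : ℕ} (hN : n + 2 ≤ N) :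
    ((Finset.range N).filter (fun i => 1 ≤ i ∧ gap G (i+1) = n+1)).card
      = if ∃ i, 1 ≤ i ∧ gap G (i+1) = n+1 then 1 else 0 := by
  classical
  by_cases hX : ∃ i, 1 ≤ i ∧ gap G (i+1) = n+1
  · obtain ⟨i₀, hi₀, hgi₀⟩ := hX
    rw [if_pos ⟨i₀, hi₀, hgi₀⟩]
    have : (Finset.range N).filter (fun i => 1 ≤ i ∧ gap G (i+1) = n+1) = {i₀} := by
      ext j
      simp only [Finset.mem_filter, Finset.mem_range, Finset.mem_singleton]
      constructor
      · rintro ⟨hjN, hj1, hgj⟩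
        rcases lt_trichotomy j i₀ with h | h | h
        · exact absurd (gap_lt hm hg (by omega) (by omega : j + 1 < i₀ + 1)) (by omega)
        · exact h
        · exact absurd (gap_lt hm hg (by omega) (by omega : i₀ + 1 < j + 1)) (by omega)
      · rintro rfl
        have := self_le_gap hm hg (show 1 ≤ j + 1 by omega)
        exact ⟨by omega, hi₀, hgi₀⟩
    rw [this, Finset.card_singleton]
  · rw [if_neg hX, Finset.card_eq_zero, Finset.filter_eq_empty_iff]
    intro j _
    intro h
    exact hX ⟨j, h.1, h.2⟩

include hm hg in
open Classical in
lemma card_filter_sum_eq {N n : ℕ} (hN : n + 2 ≤ N) :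
    ((Finset.range N).filter (fun i => 1 ≤ i ∧ gap G i + gap G (i+1) = n+1)).card
      = if ∃ i, 1 ≤ i ∧ gap G i + gap G (i+1) = n+1 then 1 else 0 := by
  classical
  by_cases hX : ∃ i, 1 ≤ i ∧ gap G i + gap G (i+1) = n+1
  · obtain ⟨i₀, hi₀, hgi₀⟩ := hX
    rw [if_pos ⟨i₀, hi₀, hgi₀⟩]
    have : (Finset.range N).filter (fun i => 1 ≤ i ∧ gap G i + gap G (i+1) = n+1)
        = {i₀} := by
      ext j
      simp only [Finset.mem_filter, Finset.mem_range, Finset.mem_singleton]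
      constructor
      · rintro ⟨hjN, hj1, hgj⟩
        rcases lt_trichotomy j i₀ with h | h | h
        · have h1 := gap_lt hm hg (by omega : 1 ≤ j) h
          have h2 := gap_lt hm hg (by omega : 1 ≤ j + 1) (by omega : j + 1 < i₀ + 1)
          omega
        · exact h
        · have h1 := gap_lt hm hg (by omega : 1 ≤ i₀) h
          have h2 := gap_lt hm hg (by omega : 1 ≤ i₀ + 1) (by omega : i₀ + 1 < j + 1)
          omega
      · rintro rfl
        have h1 := self_le_gap hm hg (show 1 ≤ j + 1 by omega)
        have h2 := gap_pos hm (show 1 ≤ j by omega)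
        exact ⟨by omega, hi₀, hgi₀⟩
    rw [this, Finset.card_singleton]
  · rw [if_neg hX, Finset.card_eq_zero, Finset.filter_eq_empty_iff]
    intro j _ h
    exact hX ⟨j, h.1, h.2⟩

include hm hg in
open Classical in
lemma Pset_diff {N n : ℕ} (hN : n + 2 ≤ N) :
    ((Pset G N (n+1)).card : ℤ) - ((Pset G N n).card : ℤ)
      = (if ∃ i, 1 ≤ i ∧ gap G (i+1) = n+1 then 1 else 0)
        - (if ∃ i, 1 ≤ i ∧ gap G i + gap G (i+1) = n+1 then 1 else 0) := by
  classical
  set A := Pset G N (n+1) with hA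
  set B := Pset G N n with hB
  have hAB : A \ B = (Finset.range N).filter (fun i => 1 ≤ i ∧ gap G (i+1) = n+1) := by
    ext j
    simp only [Finset.mem_sdiff, hA, hB, mem_Pset, Finset.mem_filter, Finset.mem_range]
    constructor
    · rintro ⟨⟨h1, h2, h3, h4⟩, h5⟩
      refine ⟨h1, h2, ?_⟩
      by_contra hne
      exact h5 ⟨h1, h2, by omega, by omega⟩
    · rintro ⟨h1, h2, h3⟩
      have hgp : 1 ≤ gap G j := gap_pos hm h2
      exact ⟨⟨h1, h2, by omega, by omega⟩, by intro h; omega⟩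
  have hBA : B \ A = (Finset.range N).filter
      (fun i => 1 ≤ i ∧ gap G i + gap G (i+1) = n+1) := by
    ext j
    simp only [Finset.mem_sdiff, hA, hB, mem_Pset, Finset.mem_filter, Finset.mem_range]
    constructor
    · rintro ⟨⟨h1, h2, h3, h4⟩, h5⟩
      refine ⟨h1, h2, ?_⟩
      by_contra hne
      exact h5 ⟨h1, h2, by omega, by omega⟩
    · rintro ⟨h1, h2, h3⟩
      have hgp : 1 ≤ gap G j := gap_pos hm h2
      exact ⟨⟨h1, h2, by omega, by omega⟩, by intro h; omega⟩
  have h1 : (A \ B).card + (A ∩ B).card = A.card := Finset.card_sdiff_add_card_inter A B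
  have h2 : (B \ A).card + (B ∩ A).card = B.card := Finset.card_sdiff_add_card_inter B A
  have h3 : A ∩ B = B ∩ A := Finset.inter_comm A B
  rw [hAB] at h1
  rw [hBA] at h2
  rw [card_filter_gap_eq hm hg hN] at h1
  rw [card_filter_sum_eq hm hg hN] at h2
  rw [h3] at h1
  split_ifs at h1 h2 ⊢ <;> push_cast <;> omega


end

section
variable {w : ℕ → Fin 2} {G : ℕ → ℕ}

lemma win_append (p a b : ℕ) : win w p (a + b) = win w p a ++ win w (p + a) b := by
  simp only [win, List.range_add, List.map_append, List.map_map]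
  congr 1
  apply List.map_congr_left
  intro k _
  simp [Nat.add_assoc]

lemma factorAt_append {p : ℕ} {x y : List (Fin 2)} :
    FactorAt w p (x ++ y) ↔ FactorAt w p x ∧ FactorAt w (p + x.length) y := by
  simp only [factorAt_iff_win, List.length_append, win_append]
  constructor
  · intro h
    exact List.append_inj h (by simpa using congrArg List.length h |>.symm ▸ rfl)
  · rintro ⟨h1, h2⟩
    rw [← h1, ← h2]

lemma factorAt_single_one {p : ℕ} : FactorAt w p [(1 : Fin 2)] ↔ w p = 1 := by
  have h1 : List.range 1 = [0] := by decide
  simp [FactorAt, h1, eq_comm]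

lemma factorAt_replicate {p k : ℕ} :
    FactorAt w p (List.replicate k (0 : Fin 2)) ↔ ∀ t, t < k → w (p + t) = 0 := by
  rw [factorAt_iff_win, List.length_replicate]
  constructor
  · intro h t ht
    exact repl_eq_win_imp h t ht
  · intro h
    apply List.ext_getElem (by simp)
    intro t h1 h2
    rw [List.getElem_replicate, win_getElem w p k t (by simpa using h1)]
    exact (h t (by simpa using h1)).symm

variable (hm : StrictMono G)
  (hw : ∀ p, 1 ≤ p → (w p = 1 ↔ ∃ i, 1 ≤ i ∧ G i = p))

include hm hw in
lemma consecutive_ones {j p q : ℕ} (hpj : G j = p) (hq : w q = 1) (hpq : p < q)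
    (hzero : ∀ t, p < t → t < q → w t = 0) : G (j + 1) = q := by
  obtain ⟨j', hj', hGj'⟩ := (hw q (by omega)).mp hq
  have hjj' : j < j' := by
    have := hm.lt_iff_lt (a := j) (b := j')
    omega
  rcases Nat.eq_or_lt_of_le hjj' with h | h
  · rw [← h] at hGj'; exact hGj'
  · exfalso
    have h1 : G j < G (j+1) := hm (by omega)
    have h2 : G (j+1) < G j' := hm (by omega)
    have := hzero (G (j+1)) (by omega) (by omega)
    rw [w_G hm hw (by omega)] at this
    exact absurd this (by decide)

include hm hw in
lemma factor_101_iff (n : ℕ) :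
    IsFactor w ([1] ++ List.replicate n 0 ++ [1])
      ↔ ∃ i, 1 ≤ i ∧ gap G (i + 1) = n + 1 := by
  constructor
  · rintro ⟨p, hp, hF⟩
    simp only [factorAt_append, factorAt_replicate, factorAt_single_one,
      List.length_append, List.length_replicate, List.length_cons, List.length_nil,
      List.length_singleton] at hF
    obtain ⟨⟨h1, h2⟩, h3⟩ := hF
    have h3' : w (p + 1 + n) = 1 := by
      have e : p + 1 + n = p + (0 + 1 + n) := by omega
      rw [e]; exact h3
    obtain ⟨i, hi, hGi⟩ := (hw p hp).mp h1
    have hcons : G (i + 1) = p + 1 + n := by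
      refine consecutive_ones hm hw hGi h3' (by omega) ?_
      intro t ht1 ht2
      have := h2 (t - p - 1) (by omega)
      have he : p + (0 + 1) + (t - p - 1) = t := by omega
      rwa [he] at this
    refine ⟨i, hi, ?_⟩
    have := G_succ hm i
    omega
  · rintro ⟨i, hi, hgap⟩
    have hGi : 1 ≤ G i := le_trans hi (le_G hm i)
    have hs := G_succ hm i
    refine ⟨G i, hGi, ?_⟩
    simp only [factorAt_append, factorAt_replicate, factorAt_single_one,
      List.length_append, List.length_replicate, List.length_cons, List.length_nil,
      List.length_singleton]
    refine ⟨⟨w_G hm hw hi, ?_⟩, ?_⟩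
    · intro t ht
      have e : G i + (0 + 1) + t = G i + 1 + t := by omega
      rw [e]
      exact w_between hm hw (j := i) (by omega) (by omega)
    · have e : G i + (0 + 1 + n) = G (i + 1) := by omega
      rw [e]
      exact w_G hm hw (by omega)

include hm hw in
lemma doubleGap_iff (h0 : G 0 = 0) (m : ℕ) :
    HasDoubleGap w m ↔ ∃ i, 1 ≤ i ∧ gap G i + gap G (i + 1) = m + 2 := by
  constructor
  · rintro ⟨k, hk, hcase | hcase⟩
    · obtain ⟨p, hp, hF⟩ := hcase
      simp only [factorAt_append, factorAt_replicate, factorAt_single_one,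
        List.length_append, List.length_replicate, List.length_cons, List.length_nil,
        List.length_singleton] at hF
      obtain ⟨⟨⟨⟨hA, hB⟩, hC⟩, hD⟩, hE⟩ := hF
      have hC' : w (p + 1 + k) = 1 := by
        have e : p + 1 + k = p + (0 + 1 + k) := by omega
        rw [e]; exact hC
      have hE' : w (p + m + 2) = 1 := by
        have e : p + m + 2 = p + (0 + 1 + k + (0 + 1) + (m - k)) := by omega
        rw [e]; exact hE
      obtain ⟨j, hj, hGj⟩ := (hw p hp).mp hA
      have hc1 : G (j + 1) = p + 1 + k := by
        refine consecutive_ones hm hw hGj hC' (by omega) ?_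
        intro t ht1 ht2
        have := hB (t - p - 1) (by omega)
        have he : p + (0 + 1) + (t - p - 1) = t := by omega
        rwa [he] at this
      have hc2 : G (j + 2) = p + m + 2 := by
        refine consecutive_ones hm hw hc1 hE' (by omega) ?_
        intro t ht1 ht2
        have := hD (t - (p + 1 + k) - 1) (by omega)
        have he : p + (0 + 1 + k + (0 + 1)) + (t - (p + 1 + k) - 1) = t := by omega
        rwa [he] at this
      refine ⟨j + 1, by omega, ?_⟩
      have e1 := G_succ hm j
      have e2 : G (j + 2) = G (j + 1) + gap G (j + 1 + 1) := G_succ hm (j + 1)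
      omega
    · simp only [factorAt_append, factorAt_replicate, factorAt_single_one,
        List.length_append, List.length_replicate, List.length_cons, List.length_nil,
        List.length_singleton] at hcase
      obtain ⟨⟨⟨hA, hB⟩, hC⟩, hD⟩ := hcase
      have hD' : w (m + 2) = 1 := by
        have e : m + 2 = 1 + (k + (0 + 1) + (m - k)) := by omega
        rw [e]; exact hD
      have hc1 : G (0 + 1) = 1 + k := by
        refine consecutive_ones hm hw h0 hB (by omega) ?_
        intro t ht1 ht2
        have := hA (t - 1) (by omega)
        have he : 1 + (t - 1) = t := by omega
        rwa [he] at this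
      have hc2 : G (0 + 1 + 1) = m + 2 := by
        refine consecutive_ones hm hw hc1 hD' (by omega) ?_
        intro t ht1 ht2
        have := hC (t - k - 2) (by omega)
        have he : 1 + (k + (0 + 1)) + (t - k - 2) = t := by omega
        rwa [he] at this
      refine ⟨1, le_refl 1, ?_⟩
      have hc1' : G 1 = 1 + k := hc1
      have hc2' : G 2 = m + 2 := hc2
      have e1 : G 1 = G 0 + gap G 1 := G_succ hm 0
      have e2 : G 2 = G 1 + gap G (1 + 1) := G_succ hm 1
      omega
  · rintro ⟨i, hi, hsum⟩
    have hgi : 1 ≤ gap G i := gap_pos hm hi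
    have hgi1 : 1 ≤ gap G (i + 1) := gap_pos hm (by omega)
    have hk : gap G i - 1 ≤ m := by omega
    refine ⟨gap G i - 1, hk, ?_⟩
    rcases Nat.eq_or_lt_of_le hi with h1 | h1
    · -- i = 1 : prefix case
      right
      subst h1
      simp only [factorAt_append, factorAt_replicate, factorAt_single_one,
        List.length_append, List.length_replicate, List.length_cons, List.length_nil,
        List.length_singleton]
      have hG1 : G 1 = gap G 1 := by
        have e : gap G 1 = G 1 - G 0 := rfl
        have h00 : G 0 < G 1 := hm (by omega)
        omega
      have e2 := G_succ hm 1
      have hx0 : G (0 + 1) = G 1 := rfl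
      refine ⟨⟨⟨?_, ?_⟩, ?_⟩, ?_⟩
      · intro t ht
        refine w_between hm hw (j := 0) (by omega) (by omega)
      · have e : 1 + (gap G 1 - 1) = G 1 := by omega
        rw [e]; exact w_G hm hw (by omega)
      · intro t ht
        have e : 1 + (gap G 1 - 1 + (0 + 1)) + t = G 1 + 1 + t := by omega
        rw [e]
        refine w_between hm hw (j := 1) (by omega) (by omega)
      · have e : 1 + (gap G 1 - 1 + (0 + 1) + (m - (gap G 1 - 1))) = G (1 + 1) := by
          omega
        rw [e]; exact w_G hm hw (by omega)
    · -- i ≥ 2 : interior factor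
      left
      have hi1 : 1 ≤ i - 1 := by omega
      have hGi1 : 1 ≤ G (i - 1) := le_trans hi1 (le_G hm (i - 1))
      have e1 : G i = G (i - 1) + gap G i := by
        have := G_succ hm (i - 1)
        have he : i - 1 + 1 = i := by omega
        rwa [he] at this
      have e2 := G_succ hm i
      refine ⟨G (i - 1), hGi1, ?_⟩
      simp only [factorAt_append, factorAt_replicate, factorAt_single_one,
        List.length_append, List.length_replicate, List.length_cons, List.length_nil,
        List.length_singleton]
      refine ⟨⟨⟨⟨w_G hm hw hi1, ?_⟩, ?_⟩, ?_⟩, ?_⟩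
      · intro t ht
        have e : G (i - 1) + (0 + 1) + t = G (i - 1) + 1 + t := by omega
        rw [e]
        refine w_between hm hw (j := i - 1) (by omega) ?_
        have he : i - 1 + 1 = i := by omega
        rw [he]; omega
      · have e : G (i - 1) + (0 + 1 + (gap G i - 1)) = G i := by omega
        rw [e]; exact w_G hm hw (by omega)
      · intro t ht
        have e : G (i - 1) + (0 + 1 + (gap G i - 1) + (0 + 1)) + t = G i + 1 + t := by
          omega
        rw [e]
        refine w_between hm hw (j := i) (by omega) (by omega)
      · have e : G (i - 1) + (0 + 1 + (gap G i - 1) + (0 + 1) + (m - (gap G i - 1)))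
            = G (i + 1) := by omega
        rw [e]; exact w_G hm hw (by omega)

end
end GapAux

theorem stmt13 (w : ℕ → Fin 2) (G : ℕ → ℕ) (hG : OneDistrib w G)
    (hg : GapIncreasing G) (n : ℕ) (hn : 1 ≤ n) :
    (IsFactor w ([1] ++ List.replicate n 0 ++ [1]) ∧ ¬ HasDoubleGap w (n - 1) →
      ((complexity w (n + 2) : ℤ) - (complexity w (n + 1) : ℤ))
        - ((complexity w (n + 1) : ℤ) - (complexity w n : ℤ)) = 1) ∧
    (¬ IsFactor w ([1] ++ List.replicate n 0 ++ [1]) ∧ HasDoubleGap w (n - 1) →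
      ((complexity w (n + 2) : ℤ) - (complexity w (n + 1) : ℤ))
        - ((complexity w (n + 1) : ℤ) - (complexity w n : ℤ)) = -1) ∧
    ((IsFactor w ([1] ++ List.replicate n 0 ++ [1]) ↔ HasDoubleGap w (n - 1)) →
      ((complexity w (n + 2) : ℤ) - (complexity w (n + 1) : ℤ))
        - ((complexity w (n + 1) : ℤ) - (complexity w n : ℤ)) = 0) := by
  classical
  obtain ⟨h0, hm, hw⟩ := hG
  set N := n + 2 with hN
  have c1 : complexity w n = 1 + n + (GapAux.parms G N n).card :=
    GapAux.complexity_eq h0 hm hw hg hn (by omega)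
  have c2 : complexity w (n + 1) = 1 + (n + 1) + (GapAux.parms G N (n + 1)).card :=
    GapAux.complexity_eq h0 hm hw hg (by omega) (by omega)
  have c3 : complexity w (n + 2) = 1 + (n + 2) + (GapAux.parms G N (n + 2)).card :=
    GapAux.complexity_eq h0 hm hw hg (by omega) (by omega)
  have p1 : (GapAux.parms G N (n + 1)).card = (GapAux.parms G N n).card + (GapAux.Pset G N n).card :=
    GapAux.parms_succ hm hg (by omega)
  have p2 : (GapAux.parms G N (n + 2)).card
      = (GapAux.parms G N (n + 1)).card + (GapAux.Pset G N (n + 1)).card :=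
    GapAux.parms_succ hm hg (by omega)
  have pd := GapAux.Pset_diff hm hg (N := N) (n := n) (by omega)
  have hfac := GapAux.factor_101_iff hm hw n
  have hdg := GapAux.doubleGap_iff hm hw h0 (n - 1)
  have hn1 : n - 1 + 2 = n + 1 := by omega
  rw [hn1] at hdg
  have key : ((complexity w (n + 2) : ℤ) - (complexity w (n + 1) : ℤ))
      - ((complexity w (n + 1) : ℤ) - (complexity w n : ℤ))
      = ((GapAux.Pset G N (n + 1)).card : ℤ) - ((GapAux.Pset G N n).card : ℤ) := by
    rw [c1, c2, c3]
    push_cast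
    omega
  refine ⟨?_, ?_, ?_⟩
  · rintro ⟨hf, hnd⟩
    rw [key, pd, if_pos (hfac.mp hf), if_neg (fun hY => hnd (hdg.mpr hY))]
    ring
  · rintro ⟨hf, hd⟩
    rw [key, pd, if_neg (fun hX => hf (hfac.mpr hX)), if_pos (hdg.mp hd)]
    ring
  · intro hiff
    rw [key, pd]
    by_cases hX : ∃ i, 1 ≤ i ∧ gap G (i + 1) = n + 1
    · rw [if_pos hX, if_pos (hdg.mp (hiff.mp (hfac.mpr hX)))]
      ring
    · rw [if_neg hX, if_neg (fun hY => hX (hfac.mp (hiff.mpr (hdg.mpr hY))))]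
      ring
end

section
/- There is no infinite gap increasing binary word whose subword complexity satisfies f(n) = n + 1 for all n ≥ 1; that is, no gap increasing word is Sturmian. -/
/-- The window of length `n` of `w` starting at position `i`. -/
def Fwin (w : ℕ → Fin 2) (n i : ℕ) : List (Fin 2) :=
  (List.range n).map (fun k => w (i + k))

lemma Fwin_length (w : ℕ → Fin 2) (n i : ℕ) : (Fwin w n i).length = n := by
  simp [Fwin]

lemma Fwin_mem (w : ℕ → Fin 2) (n i : ℕ) (hi : 1 ≤ i) :
    (Fwin w n i).length = n ∧ IsFactor w (Fwin w n i) := by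
  refine ⟨Fwin_length w n i, i, hi, ?_⟩
  simp [FactorAt, Fwin]

lemma Fwin_apply {w : ℕ → Fin 2} {n i j : ℕ}
    (h : Fwin w n i = Fwin w n j) {k : ℕ} (hk : k < n) :
    w (i + k) = w (j + k) := by
  have h1 : (Fwin w n i)[k]'(by simp [Fwin_length, hk]) =
      (Fwin w n j)[k]'(by simp [Fwin_length, hk]) := by
    congr 1
  simpa [Fwin, hk] using h1

theorem stmt14 :
    ¬ ∃ (w : ℕ → Fin 2) (G : ℕ → ℕ), OneDistrib w G ∧ GapIncreasing G ∧
      ∀ n, 1 ≤ n → complexity w n = n + 1 := by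
  rintro ⟨w, G, ⟨hG0, hGmono, hGone⟩, hgap, hcomp⟩
  have fin2 : ∀ a : Fin 2, a ≠ 1 → a = 0 := by decide
  have fin2' : (1 : Fin 2) ≠ 0 := by decide
  have hGle : ∀ i, i ≤ G i := fun i => hGmono.le_apply
  -- gaps grow at least linearly
  have hgapge : ∀ i, i ≤ gap G i := by
    intro i
    induction i with
    | zero => simp
    | succ j ih =>
      rcases Nat.eq_zero_or_pos j with h | h
      · subst h
        have h1 := hGle 1
        simp [gap, hG0]
        omega
      · have := hgap j h
        omega
  have hGadd : ∀ i, G (i + 1) = G i + gap G (i + 1) := by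
    intro i
    have : G i < G (i + 1) := hGmono (by omega)
    simp [gap]
    omega
  -- w is 0 strictly between consecutive G values
  have hw0 : ∀ m q, G m < q → q < G (m + 1) → w q = 0 := by
    intro m q h1 h2
    apply fin2
    intro hq
    obtain ⟨i, hi1, hi2⟩ := (hGone q (by omega)).1 hq
    rcases le_or_gt i m with h | h
    · have := hGmono.monotone h
      omega
    · have : G (m + 1) ≤ G i := hGmono.monotone (by omega)
      omega
  have hw1 : ∀ i, 1 ≤ i → w (G i) = 1 := by
    intro i hi
    exact (hGone (G i) (le_trans hi (hGle i))).2 ⟨i, hi, rfl⟩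
  set n := G 2 with hn
  have hn2 : 2 ≤ n := hGle 2
  have hG12 : G 1 < G 2 := hGmono (by norm_num)
  have hG1 : 1 ≤ G 1 := hGle 1
  have hGnn : n ≤ G n := hGle n
  have hgap1 : G n + n + 1 ≤ G (n + 1) := by
    have h1 := hgapge (n + 1)
    have h2 := hGadd n
    omega
  have hgap2 : G (n + 1) + n + 2 ≤ G (n + 2) := by
    have h1 := hgapge (n + 2)
    have h2 : G (n + 2) = G (n + 1) + gap G (n + 2) := hGadd (n + 1)
    omega
  -- (A) window around the (n+1)-st one
  have hA : ∀ k, k < n → ∀ j, j < n → w (G (n + 1) - k + j) = if j = k then 1 else 0 := by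
    intro k hk j hj
    by_cases hjk : j = k
    · subst hjk
      have : G (n + 1) - j + j = G (n + 1) := by omega
      rw [this, if_pos rfl]
      exact hw1 (n + 1) (by omega)
    · rw [if_neg hjk]
      rcases lt_or_gt_of_ne hjk with h | h
      · exact hw0 n _ (by omega) (by omega)
      · exact hw0 (n + 1) _ (by omega)
          (show G (n + 1) - k + j < G (n + 2) by omega)
  -- (B) all-zero window
  have hB : ∀ j, j < n → w (G n + 1 + j) = 0 := by
    intro j hj
    exact hw0 n _ (by omega) (by omega)
  -- (C) prefix window has two ones
  have hC1 : w (1 + (G 1 - 1)) = 1 := by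
    have h : 1 + (G 1 - 1) = G 1 := by omega
    rw [h]; exact hw1 1 le_rfl
  have hC2 : w (1 + (G 2 - 1)) = 1 := by
    have h : 1 + (G 2 - 1) = G 2 := by omega
    rw [h]; exact hw1 2 (by norm_num)
  have hk1n : G 1 - 1 < n := by omega
  have hk2n : G 2 - 1 < n := by omega
  -- the n+2 candidate factors
  set g : ℕ → List (Fin 2) := fun k =>
    if k < n then Fwin w n (G (n + 1) - k)
    else if k = n then Fwin w n (G n + 1)
    else Fwin w n 1 with hg
  -- a window with a one at index k cannot equal the prefix window
  have hnotpre : ∀ a, a < n → g a ≠ g (n + 1) := by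
    intro a ha hab
    have hga : g a = Fwin w n (G (n + 1) - a) := by simp [hg, ha]
    have hgb : g (n + 1) = Fwin w n 1 := by simp [hg]
    rw [hga, hgb] at hab
    have e1 := Fwin_apply hab hk1n
    have e2 := Fwin_apply hab hk2n
    rw [hC1, hA a ha _ hk1n] at e1
    rw [hC2, hA a ha _ hk2n] at e2
    by_cases h1 : G 1 - 1 = a
    · by_cases h2 : G 2 - 1 = a
      · omega
      · rw [if_neg h2] at e2
        exact fin2' e2.symm
    · rw [if_neg h1] at e1
      exact fin2' e1.symm
  have key : ∀ a b, a < n + 2 → b < n + 2 → a ≤ b → g a = g b → a = b := by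
    intro a b ha hb hab heq
    rcases lt_or_ge b n with hbn | hbn
    · -- both < n
      have han : a < n := lt_of_le_of_lt hab hbn
      have hga : g a = Fwin w n (G (n + 1) - a) := by simp [hg, han]
      have hgb : g b = Fwin w n (G (n + 1) - b) := by simp [hg, hbn]
      rw [hga, hgb] at heq
      by_contra hne
      have e := Fwin_apply heq han
      rw [hA a han a han, hA b hbn a han, if_pos rfl, if_neg hne] at e
      exact fin2' e
    · rcases eq_or_lt_of_le hbn with hbn' | hbn'
      · -- b = n
        rcases lt_or_ge a n with han | han
        · exfalso
          have hga : g a = Fwin w n (G (n + 1) - a) := by simp [hg, han]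
          have hgb : g b = Fwin w n (G n + 1) := by simp [hg, ← hbn']
          rw [hga, hgb] at heq
          have e := Fwin_apply heq han
          rw [hA a han a han, if_pos rfl, hB a han] at e
          exact fin2' e
        · omega
      · -- b = n + 1
        have hb1 : b = n + 1 := by omega
        subst hb1
        rcases lt_or_ge a n with han | han
        · exact absurd heq (hnotpre a han)
        · rcases eq_or_lt_of_le han with han' | han'
          · exfalso
            have hga : g a = Fwin w n (G n + 1) := by simp [hg, ← han']
            have hgb : g (n + 1) = Fwin w n 1 := by simp [hg]
            rw [hga, hgb] at heq
            have e := Fwin_apply heq hk1n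
            rw [hB _ hk1n, hC1] at e
            exact fin2' e.symm
          · omega
  set T : Finset (List (Fin 2)) := (Finset.range (n + 2)).image g with hT
  have hinj : Set.InjOn g (Finset.range (n + 2)) := by
    intro a ha b hb h
    simp only [Finset.coe_range, Set.mem_Iio] at ha hb
    rcases le_total a b with h' | h'
    · exact key a b ha hb h' h
    · exact (key b a hb ha h' h.symm).symm
  have hcard : T.card = n + 2 := by
    rw [hT, Finset.card_image_of_injOn hinj, Finset.card_range]
  set S : Set (List (Fin 2)) := {u | u.length = n ∧ IsFactor w u} with hSdef
  have hS : S.ncard = n + 1 := hcomp n (by omega)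
  have hSfin : S.Finite := by
    by_contra h
    have := Set.Infinite.ncard h
    omega
  have hsub : ↑T ⊆ S := by
    intro u hu
    simp only [hT, Finset.coe_image, Finset.coe_range, Set.mem_image, Set.mem_Iio] at hu
    obtain ⟨k, hk, rfl⟩ := hu
    rcases lt_or_ge k n with hkn | hkn
    · have : g k = Fwin w n (G (n + 1) - k) := by simp [hg, hkn]
      rw [this]
      exact Fwin_mem w n _ (by omega)
    · rcases eq_or_lt_of_le hkn with hkn' | hkn'
      · have : g k = Fwin w n (G n + 1) := by simp [hg, ← hkn']
        rw [this]
        exact Fwin_mem w n _ (by omega)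
      · have hk1 : k = n + 1 := by omega
        have : g k = Fwin w n 1 := by simp [hg, hk1]
        rw [this]
        exact Fwin_mem w n _ le_rfl
  have hle : T.card ≤ S.ncard := by
    rw [← Set.ncard_coe_finset]
    exact Set.ncard_le_ncard hsub hSfin
  omega
end

section
/- The two gap increasing words u = 0 1 0³ 1 0⁵ 1 0⁹ 1 0¹⁵ 1 0²⁵ 1 ... with gap function g_u(1)=2, g_u(2)=4, g_u(i)=g_u(i-2)+g_u(i-1) for i ≥ 3, and v = 0² 1 0³ 1 0⁶ 1 0¹⁰ 1 0¹⁷ 1 0²⁸ 1 ... with gap function g_v(1)=3, g_v(2)=4, g_v(i)=g_v(i-2)+g_v(i-1) for i ≥ 3, are distinct words but have the same subword complexity function, namely f(n) = n+1 for n ≤ 4 and f(n) = 2n-3 for n ≥ 5. -/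
/-- The gap function of the word `u = 0 1 0³ 1 0⁵ 1 0⁹ 1 0¹⁵ 1 0²⁵ 1 ...`. -/
def gu : ℕ → ℕ
  | 0 => 0
  | 1 => 2
  | 2 => 4
  | n + 3 => gu (n + 1) + gu (n + 2)

/-- The gap function of the word `v = 0² 1 0³ 1 0⁶ 1 0¹⁰ 1 0¹⁷ 1 0²⁸ 1 ...`. -/
def gv : ℕ → ℕ
  | 0 => 0
  | 1 => 3
  | 2 => 4
  | n + 3 => gv (n + 1) + gv (n + 2)

/-- The 1-distribution function of `u`. -/
def Gu (i : ℕ) : ℕ := ∑ j ∈ Finset.range (i + 1), gu j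

/-- The 1-distribution function of `v`. -/
def Gv (i : ℕ) : ℕ := ∑ j ∈ Finset.range (i + 1), gv j

/-!
Write `g = gap G`. Since the gaps grow, a factor of length `n` either contains at most one `1`, or
it contains two consecutive `1`s of `w`, at positions `G (k + 1)` and `G (k + 2)`. The factors with
at most one `1` are the `n + 1` words `0ᵃ 1 0ⁿ⁻ᵃ⁻¹` and `0ⁿ`, and they all occur. A factor with two
`1`s starts `a < g (k + 1)` letters before `G (k + 1)`; it is determined by the offset `a` of its
first `1` and the distance `g (k + 2)` to its second one, so it occurs exactly once. The map
`(k, a) ↦ a + g (k + 2)` is a bijection from these codes onto `[g 2, n)`, because the intervals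
`[g (k + 2), g (k + 2) + g (k + 1)) = [g (k + 2), g (k + 3))` tile `[g 2, ∞)`. Hence
`f n = n + 1 + (n - g 2)`, which sees the gaps only through `g 2 = 4`.
-/

open Finset

theorem StrictMono.exists_apply_le_lt_apply_succ {f : ℕ → ℕ} (hf : StrictMono f) {m : ℕ}
    (hm : f 0 ≤ m) : ∃ k, f k ≤ m ∧ m < f (k + 1) := by
  have hex : ∃ k, m < f (k + 1) := ⟨m, (hf.id_le (m + 1)).trans_lt' (Nat.lt_succ_self m)⟩
  refine ⟨Nat.find hex, ?_, Nat.find_spec hex⟩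
  rcases h : Nat.find hex with _ | k
  · exact hm
  · exact not_lt.1 (Nat.find_min hex (h ▸ Nat.lt_succ_self k))

theorem Monotone.eq_of_apply_le_lt_apply_succ {α : Type*} [Preorder α] {f : ℕ → α}
    (hf : Monotone f) {m : α} {k k' : ℕ} (hk : f k ≤ m ∧ m < f (k + 1))
    (hk' : f k' ≤ m ∧ m < f (k' + 1)) : k = k' := by
  by_contra hne
  rcases Nat.lt_or_gt_of_ne hne with h | h
  · exact (hk.2.trans_le ((hf h).trans hk'.1)).false
  · exact (hk'.2.trans_le ((hf h).trans hk.1)).false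

theorem StrictMono.apply_succ_le_of_lt_of_mem_range {α : Type*} [Preorder α] {f : ℕ → α}
    (hf : StrictMono f) {k : ℕ} {p : α} (hk : f k < p) (hp : p ∈ Set.range f) :
    f (k + 1) ≤ p := by
  obtain ⟨j, rfl⟩ := hp
  exact hf.monotone (hf.lt_iff_lt.1 hk)

theorem Monotone.apply_succ_eq_add_gap {G : ℕ → ℕ} (hG : Monotone G) (k : ℕ) :
    G (k + 1) = G k + gap G (k + 1) := by
  have : G k ≤ G (k + 1) := hG (Nat.le_succ k)
  simp only [gap, Nat.add_sub_cancel]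
  omega

theorem gap_sum_range_succ {g : ℕ → ℕ} (h0 : g 0 = 0) :
    gap (fun i => ∑ j ∈ range (i + 1), g j) = g := by
  funext i
  rcases i with _ | i
  · simp [gap, h0]
  · show ∑ j ∈ range (i + 1 + 1), g j - ∑ j ∈ range (i + 1), g j = g (i + 1)
    rw [sum_range_succ]
    omega

structure IsFibonacciLike (g : ℕ → ℕ) : Prop where
  pos_one : 0 < g 1
  one_lt_two : g 1 < g 2
  add_three (i : ℕ) : g (i + 3) = g (i + 1) + g (i + 2)

namespace IsFibonacciLike

variable {g : ℕ → ℕ}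

theorem strictMono (hg : IsFibonacciLike g) : StrictMono fun i => g (i + 1) := by
  have h : ∀ i, 0 < g (i + 1) ∧ g (i + 1) < g (i + 2) := by
    intro i
    induction i with
    | zero => exact ⟨hg.pos_one, hg.one_lt_two⟩
    | succ i ih =>
      show 0 < g (i + 2) ∧ g (i + 2) < g (i + 3)
      have := hg.add_three i
      omega
  exact strictMono_nat_of_lt_succ fun i => (h i).2

theorem succ_le (hg : IsFibonacciLike g) (i : ℕ) : i + 1 ≤ g (i + 1) := by
  have : i + g 1 ≤ g (i + 1) := hg.strictMono.add_le_nat i 0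
  have := hg.pos_one
  omega

theorem pos (hg : IsFibonacciLike g) (i : ℕ) : 0 < g (i + 1) :=
  Nat.lt_of_lt_of_le (Nat.succ_pos i) (hg.succ_le i)

theorem strictMono_add_two (hg : IsFibonacciLike g) : StrictMono fun i => g (i + 2) :=
  hg.strictMono.comp (strictMono_nat_of_lt_succ fun i => Nat.lt_succ_self (i + 1))

end IsFibonacciLike

/-- A code `(k, a)` stands for the factor of length `n` that starts `a` letters before the
`(k + 1)`-th `1` and also contains the `(k + 2)`-th `1`. -/
def twoOneCodes (g : ℕ → ℕ) (n : ℕ) : Finset (ℕ × ℕ) :=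
  (range n ×ˢ range n).filter fun q => q.2 < g (q.1 + 1) ∧ q.2 + g (q.1 + 2) < n

section TwoOneCodes

variable {g : ℕ → ℕ} {n : ℕ}

theorem mem_twoOneCodes (hg : IsFibonacciLike g) {k a : ℕ} :
    (k, a) ∈ twoOneCodes g n ↔ a < g (k + 1) ∧ a + g (k + 2) < n := by
  have : k + 2 ≤ g (k + 2) := hg.succ_le (k + 1)
  simp only [twoOneCodes, mem_filter, mem_product, mem_range]
  constructor
  · exact fun h => h.2
  · exact fun h => ⟨⟨by omega, by omega⟩, h⟩

theorem card_twoOneCodes (hg : IsFibonacciLike g) (n : ℕ) : #(twoOneCodes g n) = n - g 2 := by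
  rw [← Nat.card_Ico]
  have hmono := hg.strictMono_add_two
  refine card_nbij (fun q => q.2 + g (q.1 + 2)) ?_ ?_ ?_
  · rintro ⟨k, a⟩ hq
    rw [mem_coe, mem_twoOneCodes hg] at hq
    have : g 2 ≤ g (k + 2) := hmono.monotone (Nat.zero_le k)
    simp only [coe_Ico, Set.mem_Ico]
    omega
  · rintro ⟨k, a⟩ hq ⟨k', a'⟩ hq' h
    rw [mem_coe, mem_twoOneCodes hg] at hq hq'
    simp only at h
    have hk := hg.add_three k
    have hk' := hg.add_three k'
    have hm : g (k + 2) ≤ a + g (k + 2) ∧ a + g (k + 2) < g (k + 3) := by omega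
    have hm' : g (k' + 2) ≤ a + g (k + 2) ∧ a + g (k + 2) < g (k' + 3) := by omega
    obtain rfl : k = k' := hmono.monotone.eq_of_apply_le_lt_apply_succ hm hm'
    simp only [Prod.mk.injEq, true_and]
    omega
  · intro m hm
    simp only [coe_Ico, Set.mem_Ico] at hm
    obtain ⟨k, hk, hk'⟩ := hmono.exists_apply_le_lt_apply_succ hm.1
    have hk'' : m < g (k + 3) := hk'
    have := hg.add_three k
    refine ⟨(k, m - g (k + 2)), ?_, ?_⟩
    · rw [mem_coe, mem_twoOneCodes hg]
      omega
    · simp only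
      omega

end TwoOneCodes

def subword (w : ℕ → Fin 2) (i n : ℕ) : List (Fin 2) :=
  (List.range n).map fun m => w (i + m)

section Subword

variable {w : ℕ → Fin 2} {G : ℕ → ℕ} {n : ℕ}

theorem setOf_length_eq_and_isFactor (w : ℕ → Fin 2) (n : ℕ) :
    {u | u.length = n ∧ IsFactor w u} = (fun i => subword w i n) '' Set.Ici 1 := by
  ext u
  constructor
  · rintro ⟨rfl, i, hi, hu⟩
    exact ⟨i, hi, hu.symm⟩
  · rintro ⟨i, hi, rfl⟩
    exact ⟨by simp [subword], i, hi, by simp [FactorAt, subword]⟩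

theorem subword_eq_subword_iff {w' : ℕ → Fin 2} {i j : ℕ} :
    subword w i n = subword w' j n ↔ ∀ m < n, (w (i + m) = 1 ↔ w' (j + m) = 1) := by
  have fin_two_eq_iff (x y : Fin 2) : x = y ↔ (x = 1 ↔ y = 1) := by
    fin_cases x <;> fin_cases y <;> simp
  simp only [subword, List.map_inj_left, List.mem_range]
  exact forall₂_congr fun m _ => fin_two_eq_iff _ _

theorem subword_single_eq_subword_single_iff {a b : ℕ} :
    subword (Pi.single a 1) 0 n = subword (Pi.single b 1) 0 n ↔ ∀ m < n, (m = a ↔ m = b) := by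
  rw [subword_eq_subword_iff]
  simp only [zero_add, Pi.single_apply, ite_eq_left_iff, zero_ne_one, imp_false, not_not]

theorem OneDistrib.apply_eq_one_iff (hw : OneDistrib w G) {p : ℕ} (hp : 1 ≤ p) :
    w p = 1 ↔ p ∈ Set.range G := by
  rw [hw.2.2 p hp]
  constructor
  · exact fun ⟨i, _, hi⟩ => ⟨i, hi⟩
  · rintro ⟨i, rfl⟩
    refine ⟨i, Nat.one_le_iff_ne_zero.2 fun hi => ?_, rfl⟩
    subst hi
    rw [hw.1] at hp
    omega

theorem OneDistrib.subword_eq_single (hw : OneDistrib w G) {i k : ℕ} (hk : G k < i)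
    (hi : i ≤ G (k + 1)) (hn : i + n ≤ G (k + 2)) :
    subword w i n = subword (Pi.single (G (k + 1) - i) 1) 0 n := by
  rw [subword_eq_subword_iff]
  intro m hm
  simp only [zero_add, Pi.single_apply, ite_eq_left_iff, zero_ne_one, imp_false, not_not,
    hw.apply_eq_one_iff (show 1 ≤ i + m by omega)]
  constructor
  · rintro ⟨j, hj⟩
    have h1 := hw.2.1.lt_iff_lt.1 (show G k < G j by omega)
    have h2 := hw.2.1.lt_iff_lt.1 (show G j < G (k + 2) by omega)
    obtain rfl : j = k + 1 := by omega
    omega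
  · intro h
    exact ⟨k + 1, by omega⟩

theorem OneDistrib.subword_eq_subword_iff_mem_range (hw : OneDistrib w G) {i j : ℕ} (hi : 1 ≤ i)
    (hj : 1 ≤ j) :
    subword w i n = subword w j n ↔ ∀ m < n, (i + m ∈ Set.range G ↔ j + m ∈ Set.range G) := by
  rw [subword_eq_subword_iff]
  refine forall₂_congr fun m _ => ?_
  rw [hw.apply_eq_one_iff (by omega), hw.apply_eq_one_iff (by omega)]

theorem OneDistrib.setOf_factor_eq (hw : OneDistrib w G) (hg : IsFibonacciLike (gap G)) (n : ℕ) :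
    {u | u.length = n ∧ IsFactor w u} =
      ↑((range (n + 1)).image (fun a => subword (Pi.single a 1) 0 n) ∪
        (twoOneCodes (gap G) n).image fun q => subword w (G (q.1 + 1) - q.2) n) := by
  have hG := hw.2.1
  rw [setOf_length_eq_and_isFactor]
  ext u
  simp only [Set.mem_image, Set.mem_Ici, coe_union, coe_image, coe_range, Set.mem_union,
    Set.mem_Iio, mem_coe, Prod.exists]
  constructor
  · rintro ⟨i, hi, rfl⟩
    obtain ⟨k, hk, hk'⟩ := hG.exists_apply_le_lt_apply_succ (m := i - 1) (by rw [hw.1]; omega)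
    by_cases hn : G (k + 2) < i + n
    · right
      have e : G (k + 2) = G (k + 1) + gap G (k + 2) := hG.monotone.apply_succ_eq_add_gap (k + 1)
      refine ⟨k, G (k + 1) - i, (mem_twoOneCodes hg).2 ⟨?_, by omega⟩, by congr 1; omega⟩
      have := hG.monotone.apply_succ_eq_add_gap k
      omega
    · left
      refine ⟨min (G (k + 1) - i) n, by omega, ?_⟩
      rw [hw.subword_eq_single (k := k) (by omega) (by omega) (by omega),
        subword_single_eq_subword_single_iff]
      omega
  · have e1 := hG.monotone.apply_succ_eq_add_gap
    rintro (⟨a, ha, rfl⟩ | ⟨k, a, hq, rfl⟩)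
    · have e2 : G (n + 2) = G (n + 1) + gap G (n + 2) := e1 (n + 1)
      have := e1 n
      have := hg.succ_le n
      have : n + 2 ≤ gap G (n + 2) := hg.succ_le (n + 1)
      refine ⟨G (n + 1) - a, by omega, ?_⟩
      rw [hw.subword_eq_single (k := n) (by omega) (by omega) (by omega)]
      congr 2
      omega
    · have := e1 k
      rw [mem_twoOneCodes hg] at hq
      exact ⟨G (k + 1) - a, by omega, rfl⟩

theorem injOn_subword_single (n : ℕ) :
    Set.InjOn (fun a => subword (Pi.single a (1 : Fin 2)) 0 n) (range (n + 1)) := by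
  intro a ha b hb h
  rw [coe_range, Set.mem_Iio] at ha hb
  have h := subword_single_eq_subword_single_iff.1 h
  rcases lt_or_ge a n with han | han
  · exact (h a han).1 rfl
  rcases lt_or_ge b n with hbn | hbn
  · exact ((h b hbn).2 rfl).symm
  · omega

theorem OneDistrib.injOn_subword_twoOneCodes (hw : OneDistrib w G)
    (hg : IsFibonacciLike (gap G)) :
    Set.InjOn (fun q : ℕ × ℕ => subword w (G (q.1 + 1) - q.2) n) (twoOneCodes (gap G) n) := by
  have hG := hw.2.1
  rintro ⟨k, a⟩ hq ⟨k', a'⟩ hq' h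
  rw [mem_coe, mem_twoOneCodes hg] at hq hq'
  dsimp only at h
  have e1 := hG.monotone.apply_succ_eq_add_gap k
  have e2 : G (k + 2) = G (k + 1) + gap G (k + 2) := hG.monotone.apply_succ_eq_add_gap (k + 1)
  have e1' := hG.monotone.apply_succ_eq_add_gap k'
  have e2' : G (k' + 2) = G (k' + 1) + gap G (k' + 2) := hG.monotone.apply_succ_eq_add_gap (k' + 1)
  have h := (hw.subword_eq_subword_iff_mem_range (by omega) (by omega)).1 h
  -- The first `1` of the two windows, then their second `1`, must sit at the same offset.
  have ha : a ≤ a' := by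
    have := hG.apply_succ_le_of_lt_of_mem_range (k := k) (by omega)
      ((h a' (by omega)).2 ⟨k' + 1, by omega⟩)
    omega
  have ha' : a' ≤ a := by
    have := hG.apply_succ_le_of_lt_of_mem_range (k := k') (by omega)
      ((h a (by omega)).1 ⟨k + 1, by omega⟩)
    omega
  obtain rfl : a = a' := le_antisymm ha ha'
  have : 0 < gap G (k + 2) := hg.pos (k + 1)
  have : 0 < gap G (k' + 2) := hg.pos (k' + 1)
  have hgap : gap G (k + 2) ≤ gap G (k' + 2) := by
    have : G (k + 2) ≤ _ := hG.apply_succ_le_of_lt_of_mem_range (k := k + 1) (by omega)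
      ((h (a + gap G (k' + 2)) (by omega)).2 ⟨k' + 2, by omega⟩)
    omega
  have hgap' : gap G (k' + 2) ≤ gap G (k + 2) := by
    have : G (k' + 2) ≤ _ := hG.apply_succ_le_of_lt_of_mem_range (k := k' + 1) (by omega)
      ((h (a + gap G (k + 2)) (by omega)).1 ⟨k + 2, by omega⟩)
    omega
  rw [hg.strictMono_add_two.injective (le_antisymm hgap hgap')]

theorem OneDistrib.disjoint_subword_single_twoOneCodes (hw : OneDistrib w G)
    (hg : IsFibonacciLike (gap G)) (n : ℕ) :
    Disjoint ((range (n + 1)).image fun a => subword (Pi.single a 1) 0 n)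
      ((twoOneCodes (gap G) n).image fun q => subword w (G (q.1 + 1) - q.2) n) := by
  have hG := hw.2.1
  rw [disjoint_left]
  rintro u hu hu'
  simp only [mem_image, mem_range, Prod.exists] at hu hu'
  obtain ⟨a, -, rfl⟩ := hu
  obtain ⟨k, b, hq, h⟩ := hu'
  rw [mem_twoOneCodes hg] at hq
  have e1 := hG.monotone.apply_succ_eq_add_gap k
  have e2 : G (k + 2) = G (k + 1) + gap G (k + 2) := hG.monotone.apply_succ_eq_add_gap (k + 1)
  have : 0 < gap G (k + 2) := hg.pos (k + 1)
  rw [subword_eq_subword_iff] at h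
  have h1 := (h b (by omega)).1 ((hw.apply_eq_one_iff (by omega)).2 ⟨k + 1, by omega⟩)
  have h2 := (h (b + gap G (k + 2)) (by omega)).1
    ((hw.apply_eq_one_iff (by omega)).2 ⟨k + 2, by omega⟩)
  simp only [zero_add, Pi.single_apply, ite_eq_left_iff, zero_ne_one, imp_false, not_not] at h1 h2
  omega

theorem OneDistrib.complexity_eq (hw : OneDistrib w G) (hg : IsFibonacciLike (gap G)) (n : ℕ) :
    complexity w n = n + 1 + (n - gap G 2) := by
  rw [complexity, hw.setOf_factor_eq hg, Set.ncard_coe_finset,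
    card_union_of_disjoint (hw.disjoint_subword_single_twoOneCodes hg n),
    card_image_of_injOn (injOn_subword_single n), card_range,
    card_image_of_injOn (hw.injOn_subword_twoOneCodes hg), card_twoOneCodes hg]

end Subword

theorem isFibonacciLike_gap_Gu : IsFibonacciLike (gap Gu) := by
  rw [show gap Gu = gu from gap_sum_range_succ rfl]
  exact ⟨by decide, by decide, fun _ => rfl⟩

theorem isFibonacciLike_gap_Gv : IsFibonacciLike (gap Gv) := by
  rw [show gap Gv = gv from gap_sum_range_succ rfl]
  exact ⟨by decide, by decide, fun _ => rfl⟩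

theorem stmt15 (wu wv : ℕ → Fin 2)
    (hu : OneDistrib wu Gu) (hv : OneDistrib wv Gv) :
    (∃ p, 1 ≤ p ∧ wu p ≠ wv p) ∧
    (∀ n, 1 ≤ n → n ≤ 4 → complexity wu n = n + 1 ∧ complexity wv n = n + 1) ∧
    (∀ n, 5 ≤ n → complexity wu n = 2 * n - 3 ∧ complexity wv n = 2 * n - 3) := by
  have hcu := hu.complexity_eq isFibonacciLike_gap_Gu
  have hcv := hv.complexity_eq isFibonacciLike_gap_Gv
  have hgu : gap Gu 2 = 4 := by decide
  have hgv : gap Gv 2 = 4 := by decide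
  have hwu : wu 2 = 1 := (hu.apply_eq_one_iff (by omega)).2 ⟨1, by decide⟩
  have hwv : wv 2 ≠ 1 := fun h => by
    have := hv.2.1.apply_succ_le_of_lt_of_mem_range (k := 0) (by rw [hv.1]; omega)
      ((hv.apply_eq_one_iff (by omega)).1 h)
    exact absurd this (by decide)
  refine ⟨⟨2, by omega, by rw [hwu]; exact Ne.symm hwv⟩, fun n _ _ => ?_, fun n _ => ?_⟩ <;>
    rw [hcu, hcv, hgu, hgv] <;> omega
end
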